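/- arXiv:1403.1801 — 8 statements merged into one kernel-verified Lean document; each statement's English description precedes it below -/
import Mathlib

section
/- For every integer k ≥ 1, the 2-adic valuation of s_k equals wt(k) − 1, where s_k = 2^{2k}(2^{2k−1} − 1)|B_{2k}|/(2k)!. -/
open Nat Finset

lemma even_choose_sum (m : ℕ) (hm : m ≠ 0) :
    ∑ i ∈ range (m + 1), (if Even i then (m.choose i : ℤ) else 0) = 2 ^ (m - 1) := by
  have h1 : ∑ i ∈ range (m + 1), (m.choose i : ℤ) = 2 ^ m := by
    exact_mod_cast congrArg (Nat.cast (R := ℤ)) (Nat.sum_range_choose m)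
  have h2 := Int.alternating_sum_range_choose_of_ne hm
  have h3 : (2 : ℤ) * ∑ i ∈ range (m + 1), (if Even i then (m.choose i : ℤ) else 0)
      = 2 ^ m := by
    rw [Finset.mul_sum]
    calc ∑ i ∈ range (m + 1), 2 * (if Even i then (m.choose i : ℤ) else 0)
        = ∑ i ∈ range (m + 1), ((m.choose i : ℤ) + (-1) ^ i * m.choose i) := by
          refine Finset.sum_congr rfl fun i _ => ?_
          rcases Nat.even_or_odd i with h | h
          · simp [h, h.neg_one_pow]; ring
          · simp [Nat.not_even_iff_odd.2 h, h.neg_one_pow]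
      _ = 2 ^ m := by rw [Finset.sum_add_distrib, h1, h2, add_zero]
  have : (2 : ℤ) ^ m = 2 * 2 ^ (m - 1) := by
    conv_lhs => rw [show m = 1 + (m - 1) by omega]
    rw [pow_add, pow_one]
  rw [this] at h3; exact mul_left_cancel₀ (by norm_num) h3

lemma key_sum (n : ℕ) (hn : Even n) (h2 : 2 ≤ n) :
    ∑ i ∈ range n, ((n + 1).choose i : ℤ) *
      (if i = 1 ∨ (Even i ∧ i ≠ 0) then 1 else 0) = 2 ^ n - 1 := by
  have hsplit : ∀ i ∈ range n, ((n + 1).choose i : ℤ) *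
      (if i = 1 ∨ (Even i ∧ i ≠ 0) then 1 else 0)
      = (if Even i then ((n + 1).choose i : ℤ) else 0)
        + (if i = 1 then ((n + 1).choose i : ℤ) else 0)
        - (if i = 0 then ((n + 1).choose i : ℤ) else 0) := by
    intro i _
    rcases Nat.even_or_odd i with h | h
    · rcases eq_or_ne i 0 with rfl | hi0
      · simp
      · have h1 : i ≠ 1 := by rintro rfl; exact (Nat.not_even_iff_odd.2 odd_one) h
        simp [h, hi0, h1]
    · have hne : ¬ Even i := Nat.not_even_iff_odd.2 h
      rcases eq_or_ne i 1 with rfl | hi1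
      · simp
      · have hi0 : i ≠ 0 := fun hh => hne (hh ▸ Even.zero)
        simp [hne, hi1, hi0]
  rw [Finset.sum_congr rfl hsplit]
  have hE : ∑ i ∈ range (n + 2), (if Even i then ((n + 1).choose i : ℤ) else 0)
      = 2 ^ n := by
    have := even_choose_sum (n + 1) (Nat.succ_ne_zero n)
    simpa using this
  have hlast : ∑ i ∈ range n, (if Even i then ((n + 1).choose i : ℤ) else 0)
      = 2 ^ n - (n + 1) := by
    rw [Finset.sum_range_succ, Finset.sum_range_succ] at hE
    have hodd : ¬ Even (n + 1) := by simp [Nat.even_add_one, Nat.not_even_iff_odd,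
      hn]
    rw [if_neg hodd, if_pos hn, add_zero, Nat.choose_succ_self_right] at hE
    push_cast at hE ⊢
    linarith
  rw [Finset.sum_sub_distrib, Finset.sum_add_distrib, hlast]
  rw [Finset.sum_ite_eq' (range n) 1 (fun i => ((n + 1).choose i : ℤ)),
    Finset.sum_ite_eq' (range n) 0 (fun i => ((n + 1).choose i : ℤ))]
  have h1 : (1 : ℕ) ∈ range n := Finset.mem_range.2 (by omega)
  have h0 : (0 : ℕ) ∈ range n := Finset.mem_range.2 (by omega)
  rw [if_pos h1, if_pos h0]
  simp only [Nat.choose_one_right, Nat.choose_zero_right]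
  push_cast
  ring

lemma odd_int_cast_zmod_two {z : ℤ} (h : Odd z) : (z : ZMod 2) = 1 := by
  obtain ⟨t, rfl⟩ := h
  push_cast
  rw [show ((2 : ZMod 2)) = 0 by decide]
  ring

lemma odd_of_cast_zmod_two {z : ℤ} (h : (z : ZMod 2) = 1) : Odd z := by
  rcases Int.even_or_odd z with ⟨t, rfl⟩ | hz
  · exfalso
    rw [show ((t + t : ℤ) : ZMod 2) = (2 : ZMod 2) * t by push_cast; ring,
      show ((2 : ZMod 2)) = 0 by decide, zero_mul] at h
    exact one_ne_zero h.symm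
  · exact hz

lemma bern_odd_zero {i : ℕ} (h : Odd i) (h1 : 1 < i) : bernoulli i = 0 := by
  rw [bernoulli_eq_bernoulli'_of_ne_one (by omega), bernoulli'_eq_zero_of_odd h h1]

lemma bern_aux (n : ℕ) : ∃ a b : ℤ, Odd b ∧ (bernoulli n : ℚ) * (2 * b) = a ∧
    ((n = 1 ∨ (Even n ∧ n ≠ 0)) → Odd a) := by
  induction n using Nat.strong_induction_on with
  | _ n ih =>
  match n, ih with
  | 0, _ => exact ⟨2, 1, odd_one, by norm_num, by rintro (h | ⟨-, h⟩) <;> simp at h⟩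
  | 1, _ => exact ⟨-1, 1, odd_one, by rw [bernoulli_one]; norm_num, fun _ => ⟨-1, by ring⟩⟩
  | (m + 2), ih =>
  rcases Nat.even_or_odd (m + 2) with he | ho
  swap
  · refine ⟨0, 1, odd_one, ?_, ?_⟩
    · rw [bern_odd_zero ho (by omega)]; norm_num
    · rintro (h | ⟨h, -⟩)
      · omega
      · exact absurd h (Nat.not_even_iff_odd.2 ho)
  -- even case
  have hs := sum_bernoulli (m + 3)
  rw [if_neg (by omega)] at hs
  rw [Finset.sum_range_succ, Nat.choose_succ_self_right] at hs
  have hrec : ((m + 3 : ℕ) : ℚ) * bernoulli (m + 2)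
      = -∑ i ∈ range (m + 2), ((m + 3).choose i : ℚ) * bernoulli i := by
    push_cast at hs ⊢
    linarith
  have hex : ∀ i : ℕ, ∃ a b : ℤ, Odd b ∧ (i < m + 2 →
      ((bernoulli i : ℚ) * (2 * b) = a ∧ ((i = 1 ∨ (Even i ∧ i ≠ 0)) → Odd a))) := by
    intro i
    by_cases hi : i < m + 2
    · obtain ⟨a, b, hb, h1, h2⟩ := ih i hi
      exact ⟨a, b, hb, fun _ => ⟨h1, h2⟩⟩
    · exact ⟨1, 1, odd_one, fun h => absurd h hi⟩
  choose A B hB hP using hex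
  have hPiOdd : Odd (∏ j ∈ range (m + 2), B j) :=
    Finset.prod_induction _ Odd (fun x y hx hy => hx.mul hy) odd_one (fun i _ => hB i)
  have hErOdd : ∀ i : ℕ, Odd (∏ j ∈ (range (m + 2)).erase i, B j) := fun i =>
    Finset.prod_induction _ Odd (fun x y hx hy => hx.mul hy) odd_one (fun j _ => hB j)
  have hm3odd : Odd ((m + 3 : ℕ) : ℤ) := by
    obtain ⟨t, ht⟩ := he
    exact ⟨t, by push_cast; omega⟩
  refine ⟨-∑ i ∈ range (m + 2), ((m + 3).choose i : ℤ) * A i *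
      ∏ j ∈ (range (m + 2)).erase i, B j,
    ((m + 3 : ℕ) : ℤ) * ∏ j ∈ range (m + 2), B j, hm3odd.mul hPiOdd, ?_, ?_⟩
  · -- the defining equation
    have step : ∀ i ∈ range (m + 2),
        ((m + 3).choose i : ℚ) * bernoulli i * (2 * (∏ j ∈ range (m + 2), B j : ℤ))
        = ((m + 3).choose i : ℚ) * (A i : ℚ) *
            ((∏ j ∈ (range (m + 2)).erase i, B j : ℤ) : ℚ) := by
      intro i hi
      have hA := (hP i (Finset.mem_range.mp hi)).1
      have hfac : (∏ j ∈ range (m + 2), B j) =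
          B i * ∏ j ∈ (range (m + 2)).erase i, B j :=
        (Finset.mul_prod_erase (range (m + 2)) B hi).symm
      rw [hfac]
      push_cast
      rw [← hA]
      ring
    push_cast
    calc (bernoulli (m + 2) : ℚ) * (2 * ((m + 3) * ∏ j ∈ range (m + 2), (B j : ℚ)))
        = (((m + 3 : ℕ) : ℚ) * bernoulli (m + 2)) *
            (2 * ((∏ j ∈ range (m + 2), B j : ℤ) : ℚ)) := by push_cast; ring
      _ = (-∑ i ∈ range (m + 2), ((m + 3).choose i : ℚ) * bernoulli i) *
            (2 * ((∏ j ∈ range (m + 2), B j : ℤ) : ℚ)) := by rw [hrec]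
      _ = -∑ i ∈ range (m + 2), ((m + 3).choose i : ℚ) * bernoulli i *
            (2 * ((∏ j ∈ range (m + 2), B j : ℤ) : ℚ)) := by
          rw [neg_mul, Finset.sum_mul]
      _ = -∑ i ∈ range (m + 2), ((m + 3).choose i : ℚ) * (A i : ℚ) *
            ((∏ j ∈ (range (m + 2)).erase i, B j : ℤ) : ℚ) := by
          rw [Finset.sum_congr rfl step]
      _ = _ := by push_cast; ring
  · -- parity
    intro _
    apply odd_of_cast_zmod_two
    have hcast : ∀ i ∈ range (m + 2), ((A i : ZMod 2)) =
        (if i = 1 ∨ (Even i ∧ i ≠ 0) then 1 else 0) := by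
      intro i hi
      have hilt := Finset.mem_range.mp hi
      obtain ⟨h1, h2⟩ := hP i hilt
      by_cases hc : i = 1 ∨ (Even i ∧ i ≠ 0)
      · rw [if_pos hc]
        exact odd_int_cast_zmod_two (h2 hc)
      · rw [if_neg hc]
        push_neg at hc
        rcases Nat.even_or_odd i with hei | hoi
        · have hi0 : i = 0 := by tauto
          subst hi0
          have hq : (A 0 : ℚ) = 2 * B 0 := by rw [← h1, bernoulli_zero]; ring
          have hA0 : A 0 = 2 * B 0 := by exact_mod_cast hq
          rw [hA0]
          push_cast
          rw [show ((2 : ZMod 2)) = 0 by decide]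
          ring
        · have h3 : 1 < i := by
            rcases hoi with ⟨t, ht⟩
            omega
          have hq : (A i : ℚ) = 0 := by
            rw [← h1, bern_odd_zero hoi h3]; ring
          have hA0 : A i = 0 := by exact_mod_cast hq
          rw [hA0]
          simp
    have hkey := key_sum (m + 2) he (by omega)
    have hkey2 : ((∑ i ∈ range (m + 2), ((m + 3).choose i : ℤ) *
        (if i = 1 ∨ (Even i ∧ i ≠ 0) then 1 else 0) : ℤ) : ZMod 2) = 1 := by
      rw [hkey]
      push_cast
      rw [show ((2 : ZMod 2)) = 0 by decide, zero_pow (by omega : m + 2 ≠ 0)]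
      decide
    push_cast
    rw [CharTwo.neg_eq]
    push_cast at hkey2
    rw [← hkey2]
    refine Finset.sum_congr rfl fun i hi => ?_
    have hone : (∏ j ∈ (range (m + 2)).erase i, ((B j : ZMod 2))) = 1 :=
      Finset.prod_eq_one fun j _ => odd_int_cast_zmod_two (hB j)
    rw [hcast i hi, hone]
    ring

lemma val_odd_int {z : ℤ} (hz : Odd z) : padicValRat 2 (z : ℚ) = 0 := by
  rw [padicValRat.of_int, padicValInt.eq_zero_of_not_dvd]
  · norm_num
  · rintro ⟨c, rfl⟩
    exact (Int.not_even_iff_odd.2 hz) ⟨c, by ring⟩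

lemma padicValRat_bernoulli_even (k : ℕ) (hk : 1 ≤ k) :
    bernoulli (2 * k) ≠ 0 ∧ padicValRat 2 (bernoulli (2 * k)) = -1 := by
  obtain ⟨a, b, hb, heq, hodd⟩ := bern_aux (2 * k)
  have ha : Odd a := hodd (Or.inr ⟨⟨k, by ring⟩, by omega⟩)
  have haz : a ≠ 0 := by
    have := Int.odd_iff.mp ha
    omega
  have hbz : b ≠ 0 := by
    have := Int.odd_iff.mp hb
    omega
  have hbq : ((b : ℚ)) ≠ 0 := Int.cast_ne_zero.mpr hbz
  have haq : ((a : ℚ)) ≠ 0 := Int.cast_ne_zero.mpr haz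
  have h2b : (2 * (b : ℚ)) ≠ 0 := by positivity
  have hBval : bernoulli (2 * k) = (a : ℚ) / (2 * b) := by
    field_simp
    linarith [heq]
  constructor
  · rw [hBval]
    exact div_ne_zero haq h2b
  · rw [hBval, padicValRat.div haq h2b, padicValRat.mul (by norm_num) hbq,
      val_odd_int ha, val_odd_int hb]
    have h2 : padicValRat 2 (2 : ℚ) = 1 := by
      have := padicValRat.self (p := 2) (by norm_num)
      simpa using this
    rw [h2]
    ring

/-- `wt k` is the Hamming weight of `k`, i.e. the number of ones in its binary expansion. -/
def wt (k : ℕ) : ℕ := (Nat.digits 2 k).sum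

/-- `sL k = 2^(2k) * (2^(2k-1) - 1) * |B_(2k)| / (2k)!` is the coefficient of `p_k`
in the k-th Hirzebruch L-polynomial. -/
noncomputable def sL (k : ℕ) : ℚ :=
  2 ^ (2 * k) * (2 ^ (2 * k - 1) - 1) * |bernoulli (2 * k)| / ((2 * k)! : ℚ)

/-- `sLL k = (sL k ^ 2 - sL (2k)) / 2` is the coefficient of `p_k ^ 2`
in the 2k-th Hirzebruch L-polynomial. -/
noncomputable def sLL (k : ℕ) : ℚ := (sL k ^ 2 - sL (2 * k)) / 2

/-- For every integer `k ≥ 1`, the 2-adic valuation of `s_k` equals `wt k - 1`. -/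
theorem padicValRat_two_sL (k : ℕ) (hk : 1 ≤ k) :
    padicValRat 2 (sL k) = (wt k : ℤ) - 1 := by
  obtain ⟨hBne, hBv⟩ := padicValRat_bernoulli_even k hk
  have habsne : |bernoulli (2 * k)| ≠ 0 := abs_ne_zero.mpr hBne
  have habs : padicValRat 2 |bernoulli (2 * k)| = -1 := by
    rcases abs_choice (bernoulli (2 * k)) with h | h
    · rw [h]; exact hBv
    · rw [h, padicValRat.neg]; exact hBv
  have heven : Even ((2 : ℤ) ^ (2 * k - 1)) :=
    ⟨2 ^ (2 * k - 2), by rw [show 2 * k - 1 = (2 * k - 2) + 1 from by omega, pow_succ]; ring⟩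
  have hz : Odd ((2 : ℤ) ^ (2 * k - 1) - 1) := heven.sub_odd odd_one
  have hcast : ((2 : ℚ) ^ (2 * k - 1) - 1) = (((2 : ℤ) ^ (2 * k - 1) - 1 : ℤ) : ℚ) := by
    push_cast; ring
  have hzne : ((2 : ℚ) ^ (2 * k - 1) - 1) ≠ 0 := by
    rw [hcast]
    exact Int.cast_ne_zero.mpr (by have := Int.odd_iff.mp hz; omega)
  have hpow : ((2 : ℚ) ^ (2 * k)) ≠ 0 := by positivity
  have hfact : (((2 * k)! : ℕ) : ℚ) ≠ 0 := Nat.cast_ne_zero.mpr (2 * k).factorial_ne_zero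
  have hwt2 : (Nat.digits 2 (2 * k)).sum = wt k := by
    rw [Nat.digits_def' (by norm_num : 1 < 2) (by positivity),
      show 2 * k % 2 = 0 from by omega, show 2 * k / 2 = k from by omega]
    simp [wt]
  have hleg := sub_one_mul_padicValNat_factorial (p := 2) (2 * k)
  rw [show (2 - 1 : ℕ) = 1 from rfl, one_mul, hwt2] at hleg
  have hle : wt k ≤ 2 * k := by
    rw [← hwt2]
    exact digit_sum_le 2 (2 * k)
  rw [sL, padicValRat.div (mul_ne_zero (mul_ne_zero hpow hzne) habsne) hfact,
    padicValRat.mul (mul_ne_zero hpow hzne) habsne, padicValRat.mul hpow hzne,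
    padicValRat.pow (q := 2), hcast, val_odd_int hz, habs, ← padicValRat_of_nat,
    hleg]
  have h2 : padicValRat 2 (2 : ℚ) = 1 := by
    have := padicValRat.self (p := 2) (by norm_num)
    simpa using this
  rw [h2]
  push_cast [hle]
  ring
end

section
/- Let k be a positive integer with m > 2 nonzero bits in its binary expansion (i.e. wt(k) = m > 2). Then the numerator of the irreducible fraction of s_{k,k} and the numerator of the irreducible fraction of s_{2k} are both divisible by 2^{m−2}. -/
open Nat

lemma pnorm_two : padicNorm 2 (2 : ℚ) = 2⁻¹ := by
  simpa using padicNorm.padicNorm_p (p := 2) one_lt_two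

lemma pnorm_two_pow (n : ℕ) : padicNorm 2 ((2 : ℚ) ^ n) = (2 : ℚ) ^ (-(n : ℤ)) := by
  induction n with
  | zero => simp [padicNorm.one]
  | succ n ih =>
      rw [pow_succ, padicNorm.mul, ih, pnorm_two]
      push_cast
      rw [neg_add, zpow_add₀ (by norm_num : (2:ℚ) ≠ 0)]
      norm_num

lemma bern_norm (n : ℕ) : padicNorm 2 (bernoulli n) ≤ 2 := by
  induction n using Nat.strong_induction_on with
  | _ n ih =>
    match n with
    | 0 => rw [bernoulli_zero, padicNorm.one]; norm_num
    | 1 =>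
        rw [bernoulli_one]
        have : (-1/2 : ℚ) = -(1/2) := by ring
        rw [this, padicNorm.neg, padicNorm.div, padicNorm.one, pnorm_two]
        norm_num
    | (n+2) =>
        rcases Nat.even_or_odd (n+2) with he | ho
        · -- recurrence
          have h := sum_bernoulli (n+3)
          rw [if_neg (by omega)] at h
          rw [Finset.sum_range_succ] at h
          have hB : bernoulli (n+2) =
              -(∑ k ∈ Finset.range (n+2), ((n+3).choose k : ℚ) * bernoulli k) / (n+3) := by
            have hc : ((n+3).choose (n+2) : ℚ) = (n+3 : ℚ) := by
              rw [Nat.choose_succ_self_right]; push_cast; ring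
            rw [hc] at h
            field_simp
            linarith [h]
          rw [hB, padicNorm.div, padicNorm.neg]
          have hodd : ¬ (2 ∣ (n+3)) := by
            rcases he with ⟨t, ht⟩; omega
          have hden : padicNorm 2 ((n+3 : ℕ) : ℚ) = 1 :=
            (padicNorm.nat_eq_one_iff _).2 hodd
          have hden' : padicNorm 2 ((n:ℚ)+3) = 1 := by push_cast at hden ⊢; exact hden
          rw [hden', div_one]
          refine padicNorm.sum_le' (fun i hi => ?_) (by norm_num)
          rw [padicNorm.mul]
          calc padicNorm 2 (((n+3).choose i : ℚ)) * padicNorm 2 (bernoulli i)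
              ≤ 1 * 2 := by
                refine mul_le_mul (padicNorm.of_nat _) (ih i (by simp at hi; omega))
                  (padicNorm.nonneg _) (by norm_num)
            _ = 2 := by norm_num
        · rw [bernoulli_eq_bernoulli'_of_ne_one (by omega),
            bernoulli'_eq_zero_of_odd ho (by omega), padicNorm.zero]
          norm_num

lemma wt_two_mul (k : ℕ) (hk : 0 < k) : wt (2 * k) = wt k := by
  unfold wt
  rw [Nat.digits_def' (by norm_num : 1 < 2) (by omega)]
  simp [Nat.mul_div_cancel_left _ (by norm_num : 0 < 2), Nat.mul_mod_right]

lemma wt_le (k : ℕ) : wt k ≤ k := Nat.digit_sum_le 2 k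

lemma val_factorial (n : ℕ) : padicValNat 2 (n !) = n - wt n := by
  have := sub_one_mul_padicValNat_factorial (p := 2) n
  simpa [wt] using this

lemma pnorm_factorial (n : ℕ) :
    padicNorm 2 ((n ! : ℕ) : ℚ) = (2:ℚ) ^ (-((n : ℤ) - wt n)) := by
  rw [padicNorm.eq_zpow_of_nonzero (by exact_mod_cast n.factorial_ne_zero),
    padicValRat.of_nat, val_factorial]
  congr 1
  have := wt_le n
  omega

lemma dvd_num (e : ℕ) (q : ℚ) (h : padicNorm 2 q ≤ (2:ℚ) ^ (-(e:ℤ))) :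
    (2 : ℤ) ^ e ∣ q.num := by
  have hq : ((q.num : ℚ)) = q * (q.den : ℚ) := by
    rw [Rat.mul_den_eq_num]
  have hnorm : padicNorm 2 ((q.num : ℚ)) ≤ (2:ℚ) ^ (-(e:ℤ)) := by
    rw [hq, padicNorm.mul]
    calc padicNorm 2 q * padicNorm 2 ((q.den : ℚ))
        ≤ (2:ℚ) ^ (-(e:ℤ)) * 1 :=
          mul_le_mul h (padicNorm.of_nat _) (padicNorm.nonneg _)
            (zpow_nonneg (by norm_num) _)
      _ = (2:ℚ) ^ (-(e:ℤ)) := mul_one _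
  have := (padicNorm.dvd_iff_norm_le (p := 2) (n := e) (z := q.num)).2 (by exact_mod_cast hnorm)
  exact_mod_cast this

lemma norm_sL (k : ℕ) (hk : 0 < k) :
    padicNorm 2 (sL k) ≤ (2:ℚ) ^ (1 - (wt k : ℤ)) := by
  have hodd : padicNorm 2 ((2:ℚ) ^ (2*k-1) - 1) = 1 := by
    have hcast : ((2:ℚ)^(2*k-1) - 1) = (((2^(2*k-1) - 1 : ℤ)) : ℚ) := by push_cast; ring
    rw [hcast, padicNorm.int_eq_one_iff]
    intro hdvd
    have h2 : (2:ℤ) ∣ 2^(2*k-1) := dvd_pow_self 2 (by omega)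
    omega
  have habs : padicNorm 2 |bernoulli (2*k)| = padicNorm 2 (bernoulli (2*k)) := by
    rcases abs_choice (bernoulli (2*k)) with h | h
    · rw [h]
    · rw [h, padicNorm.neg]
  rw [sL, padicNorm.div, padicNorm.mul, padicNorm.mul, pnorm_two_pow, hodd, habs,
    pnorm_factorial, wt_two_mul k hk, mul_one]
  have hkey : (2:ℚ) ^ (-((2*k:ℕ):ℤ)) * padicNorm 2 (bernoulli (2*k)) /
      (2:ℚ) ^ (-(((2*k:ℕ):ℤ) - (wt k:ℤ))) =
      padicNorm 2 (bernoulli (2*k)) * (2:ℚ) ^ (-(wt k:ℤ)) := by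
    rw [div_eq_mul_inv, ← zpow_neg, mul_comm, ← mul_assoc,
      ← zpow_add₀ (by norm_num : (2:ℚ) ≠ 0), mul_comm]
    congr 2
    push_cast
    ring
  rw [hkey]
  calc padicNorm 2 (bernoulli (2*k)) * (2:ℚ) ^ (-(wt k:ℤ))
      ≤ 2 * (2:ℚ) ^ (-(wt k:ℤ)) :=
        mul_le_mul_of_nonneg_right (bern_norm _) (zpow_nonneg (by norm_num) _)
    _ = (2:ℚ) ^ (1 - (wt k:ℤ)) := by
        rw [sub_eq_add_neg, zpow_add₀ (by norm_num : (2:ℚ) ≠ 0)]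
        norm_num

/-- If `k` is a positive integer with `wt k = m > 2`, then `2^(m-2)` divides the numerator
of the irreducible fraction of `s_(k,k)` and the numerator of the irreducible fraction
of `s_(2k)`. -/
theorem two_pow_dvd_num_sLL_and_sL (k m : ℕ) (hk : 0 < k) (hm : wt k = m) (hm2 : 2 < m) :
    (2 : ℤ) ^ (m - 2) ∣ (sLL k).num ∧ (2 : ℤ) ^ (m - 2) ∣ (sL (2 * k)).num := by
  subst hm
  set m := wt k with hmdef
  have hzero : (0:ℚ) ≤ (2:ℚ) ^ (1 - (m:ℤ)) := zpow_nonneg (by norm_num) _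
  have hsk : padicNorm 2 (sL k) ≤ (2:ℚ) ^ (1 - (m:ℤ)) := norm_sL k hk
  have hs2k : padicNorm 2 (sL (2*k)) ≤ (2:ℚ) ^ (1 - (m:ℤ)) := by
    have h := norm_sL (2*k) (by omega)
    rwa [wt_two_mul k hk] at h
  have hexp : -((m - 2 : ℕ) : ℤ) = 2 - (m:ℤ) := by
    have : (2:ℕ) ≤ m := by omega
    push_cast [this]
    ring
  constructor
  · apply dvd_num
    rw [hexp]
    have hsq : padicNorm 2 (sL k ^ 2) ≤ (2:ℚ) ^ (1 - (m:ℤ)) := by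
      rw [sq, padicNorm.mul]
      calc padicNorm 2 (sL k) * padicNorm 2 (sL k)
          ≤ (2:ℚ) ^ (1 - (m:ℤ)) * (2:ℚ) ^ (1 - (m:ℤ)) :=
            mul_le_mul hsk hsk (padicNorm.nonneg _) hzero
        _ = (2:ℚ) ^ ((1 - (m:ℤ)) + (1 - (m:ℤ))) := (zpow_add₀ (by norm_num) _ _).symm
        _ ≤ (2:ℚ) ^ (1 - (m:ℤ)) := zpow_le_zpow_right₀ one_le_two (by omega)
    have hsub : padicNorm 2 (sL k ^ 2 - sL (2*k)) ≤ (2:ℚ) ^ (1 - (m:ℤ)) :=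
      le_trans padicNorm.sub (max_le hsq hs2k)
    rw [sLL, padicNorm.div, pnorm_two, div_eq_mul_inv, inv_inv]
    calc padicNorm 2 (sL k ^ 2 - sL (2*k)) * 2
        ≤ (2:ℚ) ^ (1 - (m:ℤ)) * 2 :=
          mul_le_mul_of_nonneg_right hsub (by norm_num)
      _ = (2:ℚ) ^ (2 - (m:ℤ)) := by
          rw [show (2:ℤ) - (m:ℤ) = (1 - (m:ℤ)) + 1 by ring,
            zpow_add₀ (by norm_num : (2:ℚ) ≠ 0)]
          norm_num
  · apply dvd_num
    rw [hexp]
    exact le_trans hs2k (zpow_le_zpow_right₀ one_le_two (by omega))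
end

section
/- Let n be a positive integer and let p be an odd prime such that: (i) neither 2 nor −2 is a quadratic residue modulo p; (ii) the p-adic valuation of s_{2n} is positive; and (iii) the p-adic valuation of s_n is zero. Then there are no integers x and y such that s_{n,n}·x² + s_{2n}·y = 1 or s_{n,n}·x² + s_{2n}·y = −1. -/
open Nat

/-- If `p` is an odd prime modulo which neither `2` nor `-2` is a quadratic residue,
with `ν_p (s_(2n)) > 0` and `ν_p (s_n) = 0`, then the signature equation
`s_(n,n) x² + s_(2n) y = ±1` has no integer solutions. -/
theorem no_solution_of_witness_prime (n p : ℕ) (hn : 0 < n) (hp : p.Prime) (hodd : Odd p)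
    (h2 : ¬ ∃ x : ℤ, x ^ 2 ≡ 2 [ZMOD p]) (hneg2 : ¬ ∃ x : ℤ, x ^ 2 ≡ -2 [ZMOD p])
    (hval : 0 < padicValRat p (sL (2 * n))) (hval' : padicValRat p (sL n) = 0) :
    ¬ ∃ x y : ℤ, sLL n * (x : ℚ) ^ 2 + sL (2 * n) * (y : ℚ) = 1 ∨
      sLL n * (x : ℚ) ^ 2 + sL (2 * n) * (y : ℚ) = -1 := by
  haveI : Fact p.Prime := ⟨hp⟩
  rintro ⟨x, y, h⟩
  obtain ⟨e, he, heq⟩ : ∃ e : ℤ, (e = 1 ∨ e = -1) ∧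
      sLL n * (x : ℚ) ^ 2 + sL (2 * n) * (y : ℚ) = (e : ℚ) := by
    rcases h with h | h
    · exact ⟨1, Or.inl rfl, by simpa using h⟩
    · exact ⟨-1, Or.inr rfl, by push_cast; simpa using h⟩
  have hp2 : ¬ ((p : ℤ) ∣ 2) := by
    intro hd
    have hd' : p ∣ 2 := by exact_mod_cast hd
    rcases (Nat.prime_dvd_prime_iff_eq hp Nat.prime_two).mp hd' with rfl
    exact (by norm_num : ¬ Odd 2) hodd
  -- norms
  have hS : ‖((sL n : ℚ) : ℚ_[p])‖ ≤ 1 := by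
    rw [Padic.norm_le_one_iff_val_nonneg, Padic.valuation_ratCast, hval']
  have hBlt : ‖((sL (2 * n) : ℚ) : ℚ_[p])‖ < 1 := by
    by_cases hB0 : sL (2 * n) = 0
    · simp [hB0]
    · rw [Padic.norm_eq_zpow_neg_valuation (by exact_mod_cast hB0), Padic.valuation_ratCast]
      have hp1 : (1 : ℝ) < p := by exact_mod_cast hp.one_lt
      calc (p : ℝ) ^ (-(padicValRat p (sL (2 * n)))) < (p:ℝ) ^ (0:ℤ) := by
            apply zpow_lt_zpow_right₀ hp1; omega
        _ = 1 := zpow_zero _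
  have hBle := le_of_lt hBlt
  have h2norm : ‖(2 : ℚ_[p])‖ = 1 := by
    have h1 : ‖((2 : ℤ) : ℚ_[p])‖ ≤ 1 := Padic.norm_int_le_one 2
    have h2' : ¬ ‖((2 : ℤ) : ℚ_[p])‖ < 1 := by
      rw [Padic.norm_intCast_lt_one_iff]; exact hp2
    push_cast at h1 h2'
    linarith
  have hcast : ((sLL n : ℚ) : ℚ_[p]) =
      (((sL n : ℚ) : ℚ_[p]) ^ 2 - ((sL (2 * n) : ℚ) : ℚ_[p])) / 2 := by
    rw [sLL]; push_cast; ring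
  have hA : ‖((sLL n : ℚ) : ℚ_[p])‖ ≤ 1 := by
    rw [hcast, norm_div, h2norm, div_one]
    rw [sub_eq_add_neg]
    refine le_trans (Padic.nonarchimedean _ _) ?_
    rw [norm_neg]
    apply max_le
    · calc ‖((sL n : ℚ) : ℚ_[p]) ^ 2‖ = ‖((sL n : ℚ) : ℚ_[p])‖ ^ 2 := norm_pow _ _
        _ ≤ 1 := by nlinarith [norm_nonneg ((sL n : ℚ) : ℚ_[p])]
    · exact hBle
  -- move to ℤ_[p]
  set A : ℤ_[p] := ⟨_, hA⟩ with hAdef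
  set B : ℤ_[p] := ⟨_, hBle⟩ with hBdef
  set S : ℤ_[p] := ⟨_, hS⟩ with hSdef
  have heqZ : A * (x : ℤ_[p]) ^ 2 + B * (y : ℤ_[p]) = (e : ℤ_[p]) := by
    apply Subtype.ext
    push_cast
    have := congrArg (fun q : ℚ => (q : ℚ_[p])) heq
    push_cast at this
    exact this
  have hrel : 2 * A = S ^ 2 - B := by
    rw [two_mul]
    apply Subtype.ext
    simp only [PadicInt.coe_add, PadicInt.coe_sub, PadicInt.coe_pow]
    show ((sLL n : ℚ) : ℚ_[p]) + ((sLL n : ℚ) : ℚ_[p]) = ((sL n : ℚ) : ℚ_[p]) ^ 2 - ((sL (2 * n) : ℚ) : ℚ_[p])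
    rw [hcast]
    ring
  have hB0 : PadicInt.toZMod B = 0 := by
    rw [← RingHom.mem_ker, PadicInt.ker_toZMod, IsLocalRing.mem_maximalIdeal, PadicInt.mem_nonunits]
    exact hBlt
  have hm := congrArg PadicInt.toZMod heqZ
  have hr := congrArg PadicInt.toZMod hrel
  simp only [map_add, map_mul, map_pow, map_intCast, map_sub, map_ofNat, hB0, mul_zero, zero_mul,
    add_zero, sub_zero] at hm hr
  -- hm : toZMod A * (x : ZMod p)^2 = (e : ZMod p)
  -- hr : 2 * toZMod A = (toZMod S)^2
  obtain ⟨w, hw⟩ := ZMod.intCast_surjective (PadicInt.toZMod S)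
  have key : (((w * x) ^ 2 : ℤ) : ZMod p) = ((2 * e : ℤ) : ZMod p) := by
    push_cast
    rw [mul_pow, hw, ← hr]
    rw [mul_assoc, hm]
  rcases he with rfl | rfl
  · exact h2 ⟨w * x, by have := (ZMod.intCast_eq_intCast_iff _ _ _).mp key; simpa using this⟩
  · exact hneg2 ⟨w * x, by have := (ZMod.intCast_eq_intCast_iff _ _ _).mp key; simpa using this⟩
end

section
/- Let n be a positive integer and let p and q be primes such that: (i) neither 2 nor −2 is a quadratic residue modulo p; (ii) the p-adic valuation of s_{2n} and the q-adic valuation of s_{2n} are both positive; (iii) s_{n,n} is a p-adic unit and 1/s_{n,n} is a quadratic nonresidue modulo p; and (iv) s_{n,n} is a q-adic unit and −1/s_{n,n} is a quadratic nonresidue modulo q. Then there are no integers x and y such that s_{n,n}·x² + s_{2n}·y = 1 or s_{n,n}·x² + s_{2n}·y = −1. -/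
open Nat

lemma castIntDiv {p : ℕ} [Fact p.Prime] (a b : ℤ) (hb : ((b : ℤ) : ZMod p) ≠ 0) :
    (((a / b : ℚ)) : ZMod p) = (a : ZMod p) / (b : ZMod p) := by
  have hb0 : b ≠ 0 := by rintro rfl; simp at hb
  have hbQ : (b : ℚ) ≠ 0 := Int.cast_ne_zero.2 hb0
  set r : ℚ := (a : ℚ) / (b : ℚ) with hr
  have hden : ((r.den : ℤ) : ZMod p) ≠ 0 := by
    have hdvd : ((r.den : ℤ)) ∣ b := by
      have := Rat.den_dvd a b
      rwa [Rat.divInt_eq_div] at this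
    intro h0
    have hpd : (p : ℤ) ∣ (r.den : ℤ) := by
      rwa [ZMod.intCast_zmod_eq_zero_iff_dvd] at h0
    exact hb ((ZMod.intCast_zmod_eq_zero_iff_dvd b p).2 (hpd.trans hdvd))
  have key : a * (r.den : ℤ) = r.num * b := by
    have h2 : (r.num : ℚ) / (r.den : ℚ) = r := Rat.num_div_den r
    have hd : (r.den : ℚ) ≠ 0 := by exact_mod_cast r.den_ne_zero
    have h1 : (a : ℚ) * (r.den : ℚ) = (r.num : ℚ) * (b : ℚ) := by
      rw [div_eq_iff hd] at h2
      rw [h2, hr]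
      field_simp
    exact_mod_cast h1
  have key2 : (a : ZMod p) * ((r.den : ℤ) : ZMod p) = ((r.num : ℤ) : ZMod p) * (b : ZMod p) := by
    exact_mod_cast congrArg (Int.cast : ℤ → ZMod p) key
  have hden' : ((r.den : ℕ) : ZMod p) ≠ 0 := by exact_mod_cast hden
  rw [Rat.cast_def, div_eq_div_iff hden' hb]
  push_cast at key2 ⊢
  linear_combination -key2

lemma unit_num_den {p : ℕ} [hp : Fact p.Prime] {r : ℚ} (hr : r ≠ 0)
    (h : padicValRat p r = 0) : ¬ (p : ℤ) ∣ r.num ∧ ¬ p ∣ r.den := by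
  have hcop := r.reduced
  have hnot : ¬ ((p : ℤ) ∣ r.num ∧ p ∣ r.den) := by
    rintro ⟨h1, h2⟩
    have h1' : p ∣ r.num.natAbs := Int.natCast_dvd_natCast.mp (Int.dvd_natAbs.mpr h1)
    exact hp.out.one_lt.ne' (Nat.eq_one_of_dvd_coprimes hcop h1' h2)
  rw [padicValRat_def] at h
  constructor
  · intro h1
    have h2 : ¬ p ∣ r.den := fun h2 => hnot ⟨h1, h2⟩
    have e2 : padicValNat p r.den = 0 := padicValNat.eq_zero_of_not_dvd h2
    have h1' : p ∣ r.num.natAbs := Int.natCast_dvd_natCast.mp (Int.dvd_natAbs.mpr h1)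
    have e1 : 1 ≤ padicValInt p r.num := by
      rw [padicValInt]
      exact one_le_padicValNat_of_dvd (Int.natAbs_pos.mpr (Rat.num_ne_zero.mpr hr)).ne' h1'
    omega
  · intro h2
    have h1 : ¬ (p : ℤ) ∣ r.num := fun h1 => hnot ⟨h1, h2⟩
    have e1 : padicValInt p r.num = 0 := padicValInt.eq_zero_of_not_dvd h1
    have e2 : 1 ≤ padicValNat p r.den := one_le_padicValNat_of_dvd r.den_pos.ne' h2
    omega

lemma pos_num_den {p : ℕ} [hp : Fact p.Prime] {r : ℚ}
    (h : 0 < padicValRat p r) : (p : ℤ) ∣ r.num ∧ ¬ p ∣ r.den := by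
  have hr : r ≠ 0 := by
    rintro rfl
    simp [padicValRat_def] at h
  have hcop := r.reduced
  have hnum : (p : ℤ) ∣ r.num := by
    by_contra h1
    have e1 : padicValInt p r.num = 0 := padicValInt.eq_zero_of_not_dvd h1
    rw [padicValRat_def] at h
    omega
  refine ⟨hnum, fun h2 => ?_⟩
  have h1' : p ∣ r.num.natAbs := Int.natCast_dvd_natCast.mp (Int.dvd_natAbs.mpr hnum)
  exact hp.out.one_lt.ne' (Nat.eq_one_of_dvd_coprimes hcop h1' h2)

lemma key_step {P : ℕ} [Fact P.Prime] (s t : ℚ) (x y : ℤ) (ε : ℚ) (hε : ε = 1 ∨ ε = -1)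
    (heq : s * (x : ℚ) ^ 2 + t * (y : ℚ) = ε)
    (hs : s ≠ 0)
    (hvP : 0 < padicValRat P t)
    (huP : padicValRat P s = 0) :
    IsSquare (((ε / s : ℚ)) : ZMod P) := by
  obtain ⟨hA, hB⟩ := unit_num_den hs huP
  obtain ⟨hC, hD⟩ := pos_num_den (p := P) hvP
  have hAz : ((s.num : ZMod P)) ≠ 0 := fun h => hA ((ZMod.intCast_zmod_eq_zero_iff_dvd _ _).mp h)
  have hBz : (((s.den : ℤ) : ZMod P)) ≠ 0 := by
    intro h
    exact hB (Int.natCast_dvd_natCast.mp ((ZMod.intCast_zmod_eq_zero_iff_dvd _ _).mp h))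
  have hDz : (((t.den : ℤ) : ZMod P)) ≠ 0 := by
    intro h
    exact hD (Int.natCast_dvd_natCast.mp ((ZMod.intCast_zmod_eq_zero_iff_dvd _ _).mp h))
  have hCz : ((t.num : ZMod P)) = 0 := (ZMod.intCast_zmod_eq_zero_iff_dvd _ _).mpr hC
  obtain ⟨e, he, he2⟩ : ∃ e : ℤ, (e : ℚ) = ε ∧ (e = 1 ∨ e = -1) := by
    rcases hε with h | h <;> [exact ⟨1, by simp [h], Or.inl rfl⟩; exact ⟨-1, by simp [h], Or.inr rfl⟩]
  have hsden : ((s.den : ℚ)) ≠ 0 := by exact_mod_cast s.den_ne_zero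
  have htden : ((t.den : ℚ)) ≠ 0 := by exact_mod_cast t.den_ne_zero
  have hsA : (s.num : ℚ) = s * s.den := by
    have h := Rat.num_div_den s
    rwa [div_eq_iff hsden] at h
  have htC : (t.num : ℚ) = t * t.den := by
    have h := Rat.num_div_den t
    rwa [div_eq_iff htden] at h
  have hint : s.num * (t.den : ℤ) * x ^ 2 + t.num * (s.den : ℤ) * y
      = e * (s.den : ℤ) * (t.den : ℤ) := by
    have : (s.num : ℚ) * (t.den : ℚ) * (x : ℚ) ^ 2 + (t.num : ℚ) * (s.den : ℚ) * (y : ℚ)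
        = (e : ℚ) * (s.den : ℚ) * (t.den : ℚ) := by
      rw [hsA, htC, he]
      linear_combination (s.den : ℚ) * (t.den : ℚ) * heq
    exact_mod_cast this
  have hz : (s.num : ZMod P) * ((t.den : ℤ) : ZMod P) * (x : ZMod P) ^ 2
      + (t.num : ZMod P) * ((s.den : ℤ) : ZMod P) * (y : ZMod P)
      = (e : ZMod P) * ((s.den : ℤ) : ZMod P) * ((t.den : ℤ) : ZMod P) := by
    exact_mod_cast congrArg (Int.cast : ℤ → ZMod P) hint
  rw [hCz] at hz
  have hz' : ((s.num : ZMod P)) * (x : ZMod P) ^ 2 * ((t.den : ℤ) : ZMod P)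
      = (e : ZMod P) * ((s.den : ℤ) : ZMod P) * ((t.den : ℤ) : ZMod P) := by
    linear_combination hz
  have hz'' := mul_right_cancel₀ hDz hz'
  have hAQ : ((s.num : ℤ) : ℚ) ≠ 0 := Int.cast_ne_zero.2 (Rat.num_ne_zero.mpr hs)
  have hεs : (ε / s : ℚ) = ((e * (s.den : ℤ) : ℤ) : ℚ) / ((s.num : ℤ) : ℚ) := by
    rw [← he, div_eq_div_iff hs hAQ]
    push_cast
    linear_combination (e : ℚ) * hsA
  rw [hεs, castIntDiv (e * (s.den : ℤ)) s.num hAz]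
  refine ⟨(x : ZMod P), ?_⟩
  rw [div_eq_iff hAz]
  push_cast at hz'' ⊢
  linear_combination -hz''

/-- Lemma ruling out `8n`-dimensional rational projective planes using two primes `p`, `q`:
if neither `2` nor `-2` is a quadratic residue mod `p`, both `ν_p (s_(2n)) > 0` and
`ν_q (s_(2n)) > 0`, `s_(n,n)` is a `p`-adic unit with `1/s_(n,n)` a quadratic nonresidue
mod `p`, and `s_(n,n)` is a `q`-adic unit with `-1/s_(n,n)` a quadratic nonresidue mod `q`,
then the signature equation `s_(n,n) x² + s_(2n) y = ±1` has no integer solutions. -/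
theorem no_solution_of_two_witness_primes (n p q : ℕ) [Fact p.Prime] [Fact q.Prime]
    (hn : 0 < n)
    (h2 : ¬ ∃ x : ℤ, x ^ 2 ≡ 2 [ZMOD p]) (hneg2 : ¬ ∃ x : ℤ, x ^ 2 ≡ -2 [ZMOD p])
    (hvp : 0 < padicValRat p (sL (2 * n))) (hvq : 0 < padicValRat q (sL (2 * n)))
    (hup : padicValRat p (sLL n) = 0) (hnresp : ¬ IsSquare (((1 / sLL n : ℚ)) : ZMod p))
    (huq : padicValRat q (sLL n) = 0) (hnresq : ¬ IsSquare (((-1 / sLL n : ℚ)) : ZMod q)) :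
    ¬ ∃ x y : ℤ, sLL n * (x : ℚ) ^ 2 + sL (2 * n) * (y : ℚ) = 1 ∨
      sLL n * (x : ℚ) ^ 2 + sL (2 * n) * (y : ℚ) = -1 := by
  have hs : sLL n ≠ 0 := by
    intro h0
    exact hnresp (by rw [h0]; simp)
  rintro ⟨x, y, h | h⟩
  · exact hnresp (by simpa using key_step (sLL n) (sL (2 * n)) x y 1 (Or.inl rfl) h hs hvp hup)
  · exact hnresq (by simpa using key_step (sLL n) (sL (2 * n)) x y (-1) (Or.inr rfl) h hs hvq huq)
end

section
/- There are no integers x and y such that s_{8,8}·x² + s_{16}·y = 1 or s_{8,8}·x² + s_{16}·y = −1. (This is the arithmetic content of the nonexistence of a 64-dimensional rational projective plane.) -/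
open Nat

lemma bOdd {n : ℕ} (h : Odd n) (h1 : 1 < n) : bernoulli n = 0 := by
  rw [bernoulli_eq_bernoulli'_of_ne_one (by omega), bernoulli'_eq_zero_of_odd h h1]

lemma b3 : bernoulli 3 = 0 := bOdd ⟨1, by norm_num⟩ (by norm_num)
lemma b5 : bernoulli 5 = 0 := bOdd ⟨2, by norm_num⟩ (by norm_num)
lemma b7 : bernoulli 7 = 0 := bOdd ⟨3, by norm_num⟩ (by norm_num)
lemma b9 : bernoulli 9 = 0 := bOdd ⟨4, by norm_num⟩ (by norm_num)
lemma b11 : bernoulli 11 = 0 := bOdd ⟨5, by norm_num⟩ (by norm_num)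
lemma b13 : bernoulli 13 = 0 := bOdd ⟨6, by norm_num⟩ (by norm_num)
lemma b15 : bernoulli 15 = 0 := bOdd ⟨7, by norm_num⟩ (by norm_num)
lemma b17 : bernoulli 17 = 0 := bOdd ⟨8, by norm_num⟩ (by norm_num)
lemma b19 : bernoulli 19 = 0 := bOdd ⟨9, by norm_num⟩ (by norm_num)
lemma b21 : bernoulli 21 = 0 := bOdd ⟨10, by norm_num⟩ (by norm_num)
lemma b23 : bernoulli 23 = 0 := bOdd ⟨11, by norm_num⟩ (by norm_num)
lemma b25 : bernoulli 25 = 0 := bOdd ⟨12, by norm_num⟩ (by norm_num)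
lemma b27 : bernoulli 27 = 0 := bOdd ⟨13, by norm_num⟩ (by norm_num)
lemma b29 : bernoulli 29 = 0 := bOdd ⟨14, by norm_num⟩ (by norm_num)
lemma b31 : bernoulli 31 = 0 := bOdd ⟨15, by norm_num⟩ (by norm_num)
lemma b2 : bernoulli 2 = (1 : ℚ)/6 := by
  have h := sum_bernoulli 3
  norm_num [Finset.sum_range_succ, Nat.choose, bernoulli_zero, bernoulli_one, -bernoulli_two] at h
  linarith
lemma b4 : bernoulli 4 = (-1 : ℚ)/30 := by
  have h := sum_bernoulli 5
  norm_num [Finset.sum_range_succ, Nat.choose, bernoulli_zero, bernoulli_one, b2, b3] at h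
  linarith
lemma b6 : bernoulli 6 = (1 : ℚ)/42 := by
  have h := sum_bernoulli 7
  norm_num [Finset.sum_range_succ, Nat.choose, bernoulli_zero, bernoulli_one, b2, b3, b4, b5] at h
  linarith
lemma b8 : bernoulli 8 = (-1 : ℚ)/30 := by
  have h := sum_bernoulli 9
  norm_num [Finset.sum_range_succ, Nat.choose, bernoulli_zero, bernoulli_one, b2, b3, b4, b5, b6, b7] at h
  linarith
lemma b10 : bernoulli 10 = (5 : ℚ)/66 := by
  have h := sum_bernoulli 11
  norm_num [Finset.sum_range_succ, Nat.choose, bernoulli_zero, bernoulli_one, b2, b3, b4, b5, b6, b7, b8, b9] at h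
  linarith
lemma b12 : bernoulli 12 = (-691 : ℚ)/2730 := by
  have h := sum_bernoulli 13
  norm_num [Finset.sum_range_succ, Nat.choose, bernoulli_zero, bernoulli_one, b2, b3, b4, b5, b6, b7, b8, b9, b10, b11] at h
  linarith
lemma b14 : bernoulli 14 = (7 : ℚ)/6 := by
  have h := sum_bernoulli 15
  norm_num [Finset.sum_range_succ, Nat.choose, bernoulli_zero, bernoulli_one, b2, b3, b4, b5, b6, b7, b8, b9, b10, b11, b12, b13] at h
  linarith
lemma b16 : bernoulli 16 = (-3617 : ℚ)/510 := by
  have h := sum_bernoulli 17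
  norm_num [Finset.sum_range_succ, Nat.choose, bernoulli_zero, bernoulli_one, b2, b3, b4, b5, b6, b7, b8, b9, b10, b11, b12, b13, b14, b15] at h
  linarith
lemma b18 : bernoulli 18 = (43867 : ℚ)/798 := by
  have h := sum_bernoulli 19
  norm_num [Finset.sum_range_succ, Nat.choose, bernoulli_zero, bernoulli_one, b2, b3, b4, b5, b6, b7, b8, b9, b10, b11, b12, b13, b14, b15, b16, b17] at h
  linarith
lemma b20 : bernoulli 20 = (-174611 : ℚ)/330 := by
  have h := sum_bernoulli 21
  norm_num [Finset.sum_range_succ, Nat.choose, bernoulli_zero, bernoulli_one, b2, b3, b4, b5, b6, b7, b8, b9, b10, b11, b12, b13, b14, b15, b16, b17, b18, b19] at h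
  linarith
lemma b22 : bernoulli 22 = (854513 : ℚ)/138 := by
  have h := sum_bernoulli 23
  norm_num [Finset.sum_range_succ, Nat.choose, bernoulli_zero, bernoulli_one, b2, b3, b4, b5, b6, b7, b8, b9, b10, b11, b12, b13, b14, b15, b16, b17, b18, b19, b20, b21] at h
  linarith
lemma b24 : bernoulli 24 = (-236364091 : ℚ)/2730 := by
  have h := sum_bernoulli 25
  norm_num [Finset.sum_range_succ, Nat.choose, bernoulli_zero, bernoulli_one, b2, b3, b4, b5, b6, b7, b8, b9, b10, b11, b12, b13, b14, b15, b16, b17, b18, b19, b20, b21, b22, b23] at h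
  linarith
lemma b26 : bernoulli 26 = (8553103 : ℚ)/6 := by
  have h := sum_bernoulli 27
  norm_num [Finset.sum_range_succ, Nat.choose, bernoulli_zero, bernoulli_one, b2, b3, b4, b5, b6, b7, b8, b9, b10, b11, b12, b13, b14, b15, b16, b17, b18, b19, b20, b21, b22, b23, b24, b25] at h
  linarith
lemma b28 : bernoulli 28 = (-23749461029 : ℚ)/870 := by
  have h := sum_bernoulli 29
  norm_num [Finset.sum_range_succ, Nat.choose, bernoulli_zero, bernoulli_one, b2, b3, b4, b5, b6, b7, b8, b9, b10, b11, b12, b13, b14, b15, b16, b17, b18, b19, b20, b21, b22, b23, b24, b25, b26, b27] at h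
  linarith
lemma b30 : bernoulli 30 = (8615841276005 : ℚ)/14322 := by
  have h := sum_bernoulli 31
  norm_num [Finset.sum_range_succ, Nat.choose, bernoulli_zero, bernoulli_one, b2, b3, b4, b5, b6, b7, b8, b9, b10, b11, b12, b13, b14, b15, b16, b17, b18, b19, b20, b21, b22, b23, b24, b25, b26, b27, b28, b29] at h
  linarith
lemma b32 : bernoulli 32 = (-7709321041217 : ℚ)/510 := by
  have h := sum_bernoulli 33
  norm_num [Finset.sum_range_succ, Nat.choose, bernoulli_zero, bernoulli_one, b2, b3, b4, b5, b6, b7, b8, b9, b10, b11, b12, b13, b14, b15, b16, b17, b18, b19, b20, b21, b22, b23, b24, b25, b26, b27, b28, b29, b30, b31] at h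
  linarith
lemma sL8val : sL 8 = 16931177/23260111875 := by
  have hb : |bernoulli (2*8)| = (3617 : ℚ)/510 := by
    norm_num [b16]
  rw [sL, hb]
  norm_num [Nat.factorial]

lemma sL16val : sL 16 = 16555640865486520478399/31245110285511170603633203125 := by
  have hb : |bernoulli (2*16)| = (7709321041217 : ℚ)/510 := by
    norm_num [b32]
  rw [sL, hb]
  norm_num [Nat.factorial]

lemma sLL8val : sLL 8 = -298502174589077/36976461876344580596015625 := by
  rw [sLL, sL8val, sL16val]
  norm_num
/-- There is no integer solution of the signature equation in dimension 64:
`s_(8,8) x² + s_16 y = ±1` has no integer solutions. -/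
theorem no_solution_dim_64 :
    ¬ ∃ x y : ℤ, sLL 8 * (x : ℚ) ^ 2 + sL 16 * (y : ℚ) = 1 ∨
      sLL 8 * (x : ℚ) ^ 2 + sL 16 * (y : ℚ) = -1 := by
  rintro ⟨x, y, h | h⟩ <;>
  · rw [sLL8val, sL16val] at h
    first
    | have h2 : ((-252234337527770065 * x ^ 2 + 16555640865486520478399 * y : ℤ) : ℚ)
          = ((31245110285511170603633203125 : ℤ) : ℚ) := by
        push_cast
        linear_combination (31245110285511170603633203125 : ℚ) * h
    | have h2 : ((-252234337527770065 * x ^ 2 + 16555640865486520478399 * y : ℤ) : ℚ)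
          = ((-31245110285511170603633203125 : ℤ) : ℚ) := by
        push_cast
        linear_combination (31245110285511170603633203125 : ℚ) * h
    have h3 := Int.cast_injective h2
    have h4 := congrArg (Int.cast : ℤ → ZMod 37) h3
    push_cast at h4
    have hB : (16555640865486520478399 : ZMod 37) = 0 := by decide
    rw [hB, zero_mul, add_zero] at h4
    first
    | exact (by decide : ∀ z : ZMod 37,
        (-252234337527770065 : ZMod 37) * z ^ 2 ≠ 31245110285511170603633203125) _ h4
    | exact (by decide : ∀ z : ZMod 37,
        (-252234337527770065 : ZMod 37) * z ^ 2 ≠ -31245110285511170603633203125) _ h4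
end

section
/- There are no integers x and y such that s_{5,5}·x² + s_{10}·y = 1 or s_{5,5}·x² + s_{10}·y = −1. (This is the arithmetic content of the nonexistence of a 40-dimensional rational projective plane.) -/
open Nat

set_option maxRecDepth 10000

lemma c_5_2 : Nat.choose 5 2 = 10 := by decide
lemma c_5_3 : Nat.choose 5 3 = 10 := by decide
lemma c_6_2 : Nat.choose 6 2 = 15 := by decide
lemma c_6_3 : Nat.choose 6 3 = 20 := by decide
lemma c_6_4 : Nat.choose 6 4 = 15 := by decide
lemma c_7_2 : Nat.choose 7 2 = 21 := by decide
lemma c_7_3 : Nat.choose 7 3 = 35 := by decide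
lemma c_7_4 : Nat.choose 7 4 = 35 := by decide
lemma c_7_5 : Nat.choose 7 5 = 21 := by decide
lemma c_8_2 : Nat.choose 8 2 = 28 := by decide
lemma c_8_3 : Nat.choose 8 3 = 56 := by decide
lemma c_8_4 : Nat.choose 8 4 = 70 := by decide
lemma c_8_5 : Nat.choose 8 5 = 56 := by decide
lemma c_8_6 : Nat.choose 8 6 = 28 := by decide
lemma c_9_2 : Nat.choose 9 2 = 36 := by decide
lemma c_9_3 : Nat.choose 9 3 = 84 := by decide
lemma c_9_4 : Nat.choose 9 4 = 126 := by decide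
lemma c_9_5 : Nat.choose 9 5 = 126 := by decide
lemma c_9_6 : Nat.choose 9 6 = 84 := by decide
lemma c_9_7 : Nat.choose 9 7 = 36 := by decide
lemma c_10_2 : Nat.choose 10 2 = 45 := by decide
lemma c_10_3 : Nat.choose 10 3 = 120 := by decide
lemma c_10_4 : Nat.choose 10 4 = 210 := by decide
lemma c_10_5 : Nat.choose 10 5 = 252 := by decide
lemma c_10_6 : Nat.choose 10 6 = 210 := by decide
lemma c_10_7 : Nat.choose 10 7 = 120 := by decide
lemma c_10_8 : Nat.choose 10 8 = 45 := by decide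
lemma c_11_2 : Nat.choose 11 2 = 55 := by decide
lemma c_11_3 : Nat.choose 11 3 = 165 := by decide
lemma c_11_4 : Nat.choose 11 4 = 330 := by decide
lemma c_11_5 : Nat.choose 11 5 = 462 := by decide
lemma c_11_6 : Nat.choose 11 6 = 462 := by decide
lemma c_11_7 : Nat.choose 11 7 = 330 := by decide
lemma c_11_8 : Nat.choose 11 8 = 165 := by decide
lemma c_11_9 : Nat.choose 11 9 = 55 := by decide
lemma c_12_2 : Nat.choose 12 2 = 66 := by decide
lemma c_12_3 : Nat.choose 12 3 = 220 := by decide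
lemma c_12_4 : Nat.choose 12 4 = 495 := by decide
lemma c_12_5 : Nat.choose 12 5 = 792 := by decide
lemma c_12_6 : Nat.choose 12 6 = 924 := by decide
lemma c_12_7 : Nat.choose 12 7 = 792 := by decide
lemma c_12_8 : Nat.choose 12 8 = 495 := by decide
lemma c_12_9 : Nat.choose 12 9 = 220 := by decide
lemma c_12_10 : Nat.choose 12 10 = 66 := by decide
lemma c_13_2 : Nat.choose 13 2 = 78 := by decide
lemma c_13_3 : Nat.choose 13 3 = 286 := by decide
lemma c_13_4 : Nat.choose 13 4 = 715 := by decide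
lemma c_13_5 : Nat.choose 13 5 = 1287 := by decide
lemma c_13_6 : Nat.choose 13 6 = 1716 := by decide
lemma c_13_7 : Nat.choose 13 7 = 1716 := by decide
lemma c_13_8 : Nat.choose 13 8 = 1287 := by decide
lemma c_13_9 : Nat.choose 13 9 = 715 := by decide
lemma c_13_10 : Nat.choose 13 10 = 286 := by decide
lemma c_13_11 : Nat.choose 13 11 = 78 := by decide
lemma c_14_2 : Nat.choose 14 2 = 91 := by decide
lemma c_14_3 : Nat.choose 14 3 = 364 := by decide
lemma c_14_4 : Nat.choose 14 4 = 1001 := by decide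
lemma c_14_5 : Nat.choose 14 5 = 2002 := by decide
lemma c_14_6 : Nat.choose 14 6 = 3003 := by decide
lemma c_14_7 : Nat.choose 14 7 = 3432 := by decide
lemma c_14_8 : Nat.choose 14 8 = 3003 := by decide
lemma c_14_9 : Nat.choose 14 9 = 2002 := by decide
lemma c_14_10 : Nat.choose 14 10 = 1001 := by decide
lemma c_14_11 : Nat.choose 14 11 = 364 := by decide
lemma c_14_12 : Nat.choose 14 12 = 91 := by decide
lemma c_15_2 : Nat.choose 15 2 = 105 := by decide
lemma c_15_3 : Nat.choose 15 3 = 455 := by decide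
lemma c_15_4 : Nat.choose 15 4 = 1365 := by decide
lemma c_15_5 : Nat.choose 15 5 = 3003 := by decide
lemma c_15_6 : Nat.choose 15 6 = 5005 := by decide
lemma c_15_7 : Nat.choose 15 7 = 6435 := by decide
lemma c_15_8 : Nat.choose 15 8 = 6435 := by decide
lemma c_15_9 : Nat.choose 15 9 = 5005 := by decide
lemma c_15_10 : Nat.choose 15 10 = 3003 := by decide
lemma c_15_11 : Nat.choose 15 11 = 1365 := by decide
lemma c_15_12 : Nat.choose 15 12 = 455 := by decide
lemma c_15_13 : Nat.choose 15 13 = 105 := by decide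
lemma c_16_2 : Nat.choose 16 2 = 120 := by decide
lemma c_16_3 : Nat.choose 16 3 = 560 := by decide
lemma c_16_4 : Nat.choose 16 4 = 1820 := by decide
lemma c_16_5 : Nat.choose 16 5 = 4368 := by decide
lemma c_16_6 : Nat.choose 16 6 = 8008 := by decide
lemma c_16_7 : Nat.choose 16 7 = 11440 := by decide
lemma c_16_8 : Nat.choose 16 8 = 12870 := by decide
lemma c_16_9 : Nat.choose 16 9 = 11440 := by decide
lemma c_16_10 : Nat.choose 16 10 = 8008 := by decide
lemma c_16_11 : Nat.choose 16 11 = 4368 := by decide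
lemma c_16_12 : Nat.choose 16 12 = 1820 := by decide
lemma c_16_13 : Nat.choose 16 13 = 560 := by decide
lemma c_16_14 : Nat.choose 16 14 = 120 := by decide
lemma c_17_2 : Nat.choose 17 2 = 136 := by decide
lemma c_17_3 : Nat.choose 17 3 = 680 := by decide
lemma c_17_4 : Nat.choose 17 4 = 2380 := by decide
lemma c_17_5 : Nat.choose 17 5 = 6188 := by decide
lemma c_17_6 : Nat.choose 17 6 = 12376 := by decide
lemma c_17_7 : Nat.choose 17 7 = 19448 := by decide
lemma c_17_8 : Nat.choose 17 8 = 24310 := by decide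
lemma c_17_9 : Nat.choose 17 9 = 24310 := by decide
lemma c_17_10 : Nat.choose 17 10 = 19448 := by decide
lemma c_17_11 : Nat.choose 17 11 = 12376 := by decide
lemma c_17_12 : Nat.choose 17 12 = 6188 := by decide
lemma c_17_13 : Nat.choose 17 13 = 2380 := by decide
lemma c_17_14 : Nat.choose 17 14 = 680 := by decide
lemma c_17_15 : Nat.choose 17 15 = 136 := by decide
lemma c_18_2 : Nat.choose 18 2 = 153 := by decide
lemma c_18_3 : Nat.choose 18 3 = 816 := by decide
lemma c_18_4 : Nat.choose 18 4 = 3060 := by decide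
lemma c_18_5 : Nat.choose 18 5 = 8568 := by decide
lemma c_18_6 : Nat.choose 18 6 = 18564 := by decide
lemma c_18_7 : Nat.choose 18 7 = 31824 := by decide
lemma c_18_8 : Nat.choose 18 8 = 43758 := by decide
lemma c_18_9 : Nat.choose 18 9 = 48620 := by decide
lemma c_18_10 : Nat.choose 18 10 = 43758 := by decide
lemma c_18_11 : Nat.choose 18 11 = 31824 := by decide
lemma c_18_12 : Nat.choose 18 12 = 18564 := by decide
lemma c_18_13 : Nat.choose 18 13 = 8568 := by decide
lemma c_18_14 : Nat.choose 18 14 = 3060 := by decide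
lemma c_18_15 : Nat.choose 18 15 = 816 := by decide
lemma c_18_16 : Nat.choose 18 16 = 153 := by decide
lemma c_19_2 : Nat.choose 19 2 = 171 := by decide
lemma c_19_3 : Nat.choose 19 3 = 969 := by decide
lemma c_19_4 : Nat.choose 19 4 = 3876 := by decide
lemma c_19_5 : Nat.choose 19 5 = 11628 := by decide
lemma c_19_6 : Nat.choose 19 6 = 27132 := by decide
lemma c_19_7 : Nat.choose 19 7 = 50388 := by decide
lemma c_19_8 : Nat.choose 19 8 = 75582 := by decide
lemma c_19_9 : Nat.choose 19 9 = 92378 := by decide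
lemma c_19_10 : Nat.choose 19 10 = 92378 := by decide
lemma c_19_11 : Nat.choose 19 11 = 75582 := by decide
lemma c_19_12 : Nat.choose 19 12 = 50388 := by decide
lemma c_19_13 : Nat.choose 19 13 = 27132 := by decide
lemma c_19_14 : Nat.choose 19 14 = 11628 := by decide
lemma c_19_15 : Nat.choose 19 15 = 3876 := by decide
lemma c_19_16 : Nat.choose 19 16 = 969 := by decide
lemma c_19_17 : Nat.choose 19 17 = 171 := by decide
lemma c_20_2 : Nat.choose 20 2 = 190 := by decide
lemma c_20_3 : Nat.choose 20 3 = 1140 := by decide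
lemma c_20_4 : Nat.choose 20 4 = 4845 := by decide
lemma c_20_5 : Nat.choose 20 5 = 15504 := by decide
lemma c_20_6 : Nat.choose 20 6 = 38760 := by decide
lemma c_20_7 : Nat.choose 20 7 = 77520 := by decide
lemma c_20_8 : Nat.choose 20 8 = 125970 := by decide
lemma c_20_9 : Nat.choose 20 9 = 167960 := by decide
lemma c_20_10 : Nat.choose 20 10 = 184756 := by decide
lemma c_20_11 : Nat.choose 20 11 = 167960 := by decide
lemma c_20_12 : Nat.choose 20 12 = 125970 := by decide
lemma c_20_13 : Nat.choose 20 13 = 77520 := by decide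
lemma c_20_14 : Nat.choose 20 14 = 38760 := by decide
lemma c_20_15 : Nat.choose 20 15 = 15504 := by decide
lemma c_20_16 : Nat.choose 20 16 = 4845 := by decide
lemma c_20_17 : Nat.choose 20 17 = 1140 := by decide
lemma c_20_18 : Nat.choose 20 18 = 190 := by decide
lemma b'_1 : bernoulli' 1 = (1/2) := bernoulli'_one
lemma b'_2 : bernoulli' 2 = (1/6) := bernoulli'_two
lemma b'_3 : bernoulli' 3 = 0 := bernoulli'_three
lemma b'_4 : bernoulli' 4 = (-1/30) := bernoulli'_four
lemma b'_5 : bernoulli' 5 = 0 := by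
  rw [bernoulli'_def]; norm_num [Finset.sum_range_succ, b'_1, b'_2, b'_3, b'_4, c_5_2, c_5_3]
lemma b'_6 : bernoulli' 6 = (1/42) := by
  rw [bernoulli'_def]; norm_num [Finset.sum_range_succ, b'_1, b'_2, b'_3, b'_4, b'_5, c_6_2, c_6_3, c_6_4]
lemma b'_7 : bernoulli' 7 = 0 := by
  rw [bernoulli'_def]; norm_num [Finset.sum_range_succ, b'_1, b'_2, b'_3, b'_4, b'_5, b'_6, c_7_2, c_7_3, c_7_4, c_7_5]
lemma b'_8 : bernoulli' 8 = (-1/30) := by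
  rw [bernoulli'_def]; norm_num [Finset.sum_range_succ, b'_1, b'_2, b'_3, b'_4, b'_5, b'_6, b'_7, c_8_2, c_8_3, c_8_4, c_8_5, c_8_6]
lemma b'_9 : bernoulli' 9 = 0 := by
  rw [bernoulli'_def]; norm_num [Finset.sum_range_succ, b'_1, b'_2, b'_3, b'_4, b'_5, b'_6, b'_7, b'_8, c_9_2, c_9_3, c_9_4, c_9_5, c_9_6, c_9_7]
lemma b'_10 : bernoulli' 10 = (5/66) := by
  rw [bernoulli'_def]; norm_num [Finset.sum_range_succ, b'_1, b'_2, b'_3, b'_4, b'_5, b'_6, b'_7, b'_8, b'_9, c_10_2, c_10_3, c_10_4, c_10_5, c_10_6, c_10_7, c_10_8]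
lemma b'_11 : bernoulli' 11 = 0 := by
  rw [bernoulli'_def]; norm_num [Finset.sum_range_succ, b'_1, b'_2, b'_3, b'_4, b'_5, b'_6, b'_7, b'_8, b'_9, b'_10, c_11_2, c_11_3, c_11_4, c_11_5, c_11_6, c_11_7, c_11_8, c_11_9]
lemma b'_12 : bernoulli' 12 = (-691/2730) := by
  rw [bernoulli'_def]; norm_num [Finset.sum_range_succ, b'_1, b'_2, b'_3, b'_4, b'_5, b'_6, b'_7, b'_8, b'_9, b'_10, b'_11, c_12_2, c_12_3, c_12_4, c_12_5, c_12_6, c_12_7, c_12_8, c_12_9, c_12_10]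
lemma b'_13 : bernoulli' 13 = 0 := by
  rw [bernoulli'_def]; norm_num [Finset.sum_range_succ, b'_1, b'_2, b'_3, b'_4, b'_5, b'_6, b'_7, b'_8, b'_9, b'_10, b'_11, b'_12, c_13_2, c_13_3, c_13_4, c_13_5, c_13_6, c_13_7, c_13_8, c_13_9, c_13_10, c_13_11]
lemma b'_14 : bernoulli' 14 = (7/6) := by
  rw [bernoulli'_def]; norm_num [Finset.sum_range_succ, b'_1, b'_2, b'_3, b'_4, b'_5, b'_6, b'_7, b'_8, b'_9, b'_10, b'_11, b'_12, b'_13, c_14_2, c_14_3, c_14_4, c_14_5, c_14_6, c_14_7, c_14_8, c_14_9, c_14_10, c_14_11, c_14_12]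
lemma b'_15 : bernoulli' 15 = 0 := by
  rw [bernoulli'_def]; norm_num [Finset.sum_range_succ, b'_1, b'_2, b'_3, b'_4, b'_5, b'_6, b'_7, b'_8, b'_9, b'_10, b'_11, b'_12, b'_13, b'_14, c_15_2, c_15_3, c_15_4, c_15_5, c_15_6, c_15_7, c_15_8, c_15_9, c_15_10, c_15_11, c_15_12, c_15_13]
lemma b'_16 : bernoulli' 16 = (-3617/510) := by
  rw [bernoulli'_def]; norm_num [Finset.sum_range_succ, b'_1, b'_2, b'_3, b'_4, b'_5, b'_6, b'_7, b'_8, b'_9, b'_10, b'_11, b'_12, b'_13, b'_14, b'_15, c_16_2, c_16_3, c_16_4, c_16_5, c_16_6, c_16_7, c_16_8, c_16_9, c_16_10, c_16_11, c_16_12, c_16_13, c_16_14]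
lemma b'_17 : bernoulli' 17 = 0 := by
  rw [bernoulli'_def]; norm_num [Finset.sum_range_succ, b'_1, b'_2, b'_3, b'_4, b'_5, b'_6, b'_7, b'_8, b'_9, b'_10, b'_11, b'_12, b'_13, b'_14, b'_15, b'_16, c_17_2, c_17_3, c_17_4, c_17_5, c_17_6, c_17_7, c_17_8, c_17_9, c_17_10, c_17_11, c_17_12, c_17_13, c_17_14, c_17_15]
lemma b'_18 : bernoulli' 18 = (43867/798) := by
  rw [bernoulli'_def]; norm_num [Finset.sum_range_succ, b'_1, b'_2, b'_3, b'_4, b'_5, b'_6, b'_7, b'_8, b'_9, b'_10, b'_11, b'_12, b'_13, b'_14, b'_15, b'_16, b'_17, c_18_2, c_18_3, c_18_4, c_18_5, c_18_6, c_18_7, c_18_8, c_18_9, c_18_10, c_18_11, c_18_12, c_18_13, c_18_14, c_18_15, c_18_16]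
lemma b'_19 : bernoulli' 19 = 0 := by
  rw [bernoulli'_def]; norm_num [Finset.sum_range_succ, b'_1, b'_2, b'_3, b'_4, b'_5, b'_6, b'_7, b'_8, b'_9, b'_10, b'_11, b'_12, b'_13, b'_14, b'_15, b'_16, b'_17, b'_18, c_19_2, c_19_3, c_19_4, c_19_5, c_19_6, c_19_7, c_19_8, c_19_9, c_19_10, c_19_11, c_19_12, c_19_13, c_19_14, c_19_15, c_19_16, c_19_17]
lemma b'_20 : bernoulli' 20 = (-174611/330) := by
  rw [bernoulli'_def]; norm_num [Finset.sum_range_succ, b'_1, b'_2, b'_3, b'_4, b'_5, b'_6, b'_7, b'_8, b'_9, b'_10, b'_11, b'_12, b'_13, b'_14, b'_15, b'_16, b'_17, b'_18, b'_19, c_20_2, c_20_3, c_20_4, c_20_5, c_20_6, c_20_7, c_20_8, c_20_9, c_20_10, c_20_11, c_20_12, c_20_13, c_20_14, c_20_15, c_20_16, c_20_17, c_20_18]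

lemma bern10 : bernoulli 10 = 5/66 := by norm_num [bernoulli, b'_10]
lemma bern20 : bernoulli 20 = -174611/330 := by norm_num [bernoulli, b'_20]


lemma sL5_val : sL 5 = 146/13365 := by
  rw [sL]
  norm_num [Nat.factorial, bern10, abs_of_nonneg]

lemma sL10_val : sL 10 = 183092554714/1531329465290625 := by
  rw [sL]
  rw [show |bernoulli (2*10)| = 174611/330 by
    rw [show 2*10=20 from rfl, bern20]; rw [abs_of_nonpos (by norm_num)]; norm_num]
  norm_num [Nat.factorial]

lemma sLL5_val : sLL 5 = -527062321/4593988395871875 := by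
  rw [sLL, sL5_val, show sL (2*5) = 183092554714/1531329465290625 from sL10_val]
  norm_num

lemma pow_step {n : ℕ} (t x y : ZMod n) (m : ℕ) (h : t ^ m = x) (h2 : x * x * t = y) :
    t ^ (2 * m + 1) = y := by
  subst h h2; rw [pow_succ, two_mul, pow_add]

instance fact_prime_524287 : Fact (Nat.Prime 524287) := ⟨by norm_num⟩

lemma chain_318975 : (318975 : ZMod 524287) ^ 262143 = 524286 := by
  have h1 : (318975 : ZMod 524287) ^ 1 = 318975 := pow_one _
  have h3 : (318975 : ZMod 524287) ^ 3 = 513026 := pow_step _ _ _ 1 h1 (by decide)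
  have h7 : (318975 : ZMod 524287) ^ 7 = 397567 := pow_step _ _ _ 3 h3 (by decide)
  have h15 : (318975 : ZMod 524287) ^ 15 = 500965 := pow_step _ _ _ 7 h7 (by decide)
  have h31 : (318975 : ZMod 524287) ^ 31 = 7698 := pow_step _ _ _ 15 h15 (by decide)
  have h63 : (318975 : ZMod 524287) ^ 63 = 450406 := pow_step _ _ _ 31 h31 (by decide)
  have h127 : (318975 : ZMod 524287) ^ 127 = 523059 := pow_step _ _ _ 63 h63 (by decide)
  have h255 : (318975 : ZMod 524287) ^ 255 = 515389 := pow_step _ _ _ 127 h127 (by decide)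
  have h511 : (318975 : ZMod 524287) ^ 511 = 286512 := pow_step _ _ _ 255 h255 (by decide)
  have h1023 : (318975 : ZMod 524287) ^ 1023 = 296271 := pow_step _ _ _ 511 h511 (by decide)
  have h2047 : (318975 : ZMod 524287) ^ 2047 = 157436 := pow_step _ _ _ 1023 h1023 (by decide)
  have h4095 : (318975 : ZMod 524287) ^ 4095 = 237078 := pow_step _ _ _ 2047 h2047 (by decide)
  have h8191 : (318975 : ZMod 524287) ^ 8191 = 511706 := pow_step _ _ _ 4095 h4095 (by decide)
  have h16383 : (318975 : ZMod 524287) ^ 16383 = 90943 := pow_step _ _ _ 8191 h8191 (by decide)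
  have h32767 : (318975 : ZMod 524287) ^ 32767 = 376117 := pow_step _ _ _ 16383 h16383 (by decide)
  have h65535 : (318975 : ZMod 524287) ^ 65535 = 472284 := pow_step _ _ _ 32767 h32767 (by decide)
  have h131071 : (318975 : ZMod 524287) ^ 131071 = 460115 := pow_step _ _ _ 65535 h65535 (by decide)
  have h262143 : (318975 : ZMod 524287) ^ 262143 = 524286 := pow_step _ _ _ 131071 h131071 (by decide)
  exact h262143

/-- There is no integer solution of the signature equation in dimension 40:
`s_(5,5) x² + s_10 y = ±1` has no integer solutions. -/
theorem no_solution_dim_40 :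
    ¬ ∃ x y : ℤ, sLL 5 * (x : ℚ) ^ 2 + sL 10 * (y : ℚ) = 1 ∨
      sLL 5 * (x : ℚ) ^ 2 + sL 10 * (y : ℚ) = -1 := by
  rintro ⟨x, y, h | h⟩ <;> rw [sLL5_val, sL10_val] at h
  · -- the case `= 1`: contradiction modulo 283
    have hq : ((-527062321 * x^2 + 549277664142 * y : ℤ) : ℚ)
        = ((4593988395871875 : ℤ) : ℚ) := by push_cast; linear_combination 4593988395871875 * h
    have hz : (-527062321 * x^2 + 549277664142 * y : ℤ) = 4593988395871875 :=
      Int.cast_injective hq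
    have h283 := congrArg (Int.cast : ℤ → ZMod 283) hz
    push_cast at h283
    rw [show (549277664142 : ZMod 283) = 0 from by decide, zero_mul, add_zero] at h283
    revert h283
    generalize ((x : ZMod 283)) = z
    revert z
    decide
  · -- the case `= -1`: contradiction modulo the Mersenne prime 524287
    have hq : ((-527062321 * x^2 + 549277664142 * y : ℤ) : ℚ)
        = ((-4593988395871875 : ℤ) : ℚ) := by push_cast; linear_combination 4593988395871875 * h
    have hz : (-527062321 * x^2 + 549277664142 * y : ℤ) = -4593988395871875 :=
      Int.cast_injective hq
    have hp := congrArg (Int.cast : ℤ → ZMod 524287) hz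
    push_cast at hp
    rw [show (549277664142 : ZMod 524287) = 0 from by decide, zero_mul, add_zero] at hp
    set z : ZMod 524287 := (x : ZMod 524287) with hzdef
    have hsq : z ^ 2 = 318975 := by
      have h6 : (6245 : ZMod 524287) * (-527062321 * z ^ 2)
          = 6245 * -4593988395871875 := by rw [hp]
      rwa [← mul_assoc, show (6245 : ZMod 524287) * -527062321 = 1 from by decide, one_mul,
        show (6245 : ZMod 524287) * -4593988395871875 = 318975 from by decide] at h6
    have hsq' : IsSquare (318975 : ZMod 524287) := ⟨z, by rw [← hsq]; ring⟩
    have hEu := (ZMod.euler_criterion 524287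
      (by decide : (318975 : ZMod 524287) ≠ 0)).mp hsq'
    rw [show (524287/2 : ℕ) = 262143 from rfl, chain_318975] at hEu
    exact absurd hEu (by decide)
end

section
/- There do not exist integers x and y such that 2520 divides y and −444721·x² + 118518239·y = 162820783125 or −444721·x² + 118518239·y = −162820783125. (This is the arithmetic content of the lemma that no simply-connected closed Spin 32-manifold has the rational cohomology of a rational projective plane: the cleared-denominator signature equation s_{4,4}x² + s_8 y = ±1 is incompatible with the Spin integrality condition 2520 ∣ y.) -/
lemma aux_pos (x k : ℤ)
    (h : -444721 * x ^ 2 + 118518239 * (2520 * k) = 162820783125) : False := by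
  have h8 : ((-444721 * x ^ 2 + 118518239 * (2520 * k) : ℤ) : ZMod 8)
      = ((162820783125 : ℤ) : ZMod 8) := by rw [h]
  push_cast at h8
  have : ∀ z w : ZMod 8,
      ¬(-444721 * z ^ 2 + 118518239 * (2520 * w) = 162820783125) := by decide
  exact this _ _ h8

lemma aux_neg (x k : ℤ)
    (h : -444721 * x ^ 2 + 118518239 * (2520 * k) = -162820783125) : False := by
  have h8 : ((-444721 * x ^ 2 + 118518239 * (2520 * k) : ℤ) : ZMod 8)
      = ((-162820783125 : ℤ) : ZMod 8) := by rw [h]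
  push_cast at h8
  have : ∀ z w : ZMod 8,
      ¬(-444721 * z ^ 2 + 118518239 * (2520 * w) = -162820783125) := by decide
  exact this _ _ h8

/-- The cleared-denominator signature equation `-444721 x² + 118518239 y = ±162820783125`
for a 32-dimensional rational projective plane is incompatible with the Spin integrality
condition `2520 ∣ y`. -/
theorem no_spin_dim_32 :
    ¬ ∃ x y : ℤ, 2520 ∣ y ∧
      (-444721 * x ^ 2 + 118518239 * y = 162820783125 ∨
        -444721 * x ^ 2 + 118518239 * y = -162820783125) := by
  rintro ⟨x, y, ⟨k, rfl⟩, h | h⟩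
  · exact aux_pos x k h
  · exact aux_neg x k h
end

section
/- Let k > 1 be an odd integer. Then there is no integer x such that s_k·x = 8, where s_k = 2^{2k}(2^{2k−1} − 1)|B_{2k}|/(2k)!. (This is the arithmetic content of the proposition that the Milnor E₈ manifold M^{4k} does not have the rational homotopy type of a smooth manifold for k > 1 odd: the signature equation s_k·p_k[N] = 8 has no integer solution.) -/
open Nat

section E8Aux

open Nat Finset ArithmeticFunction
open scoped ArithmeticFunction.Moebius

theorem bernoulli_fact_int : ∀ n : ℕ, ∃ z : ℤ, ((n+1)! : ℚ) * bernoulli n = z := by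
  intro n
  induction n using Nat.strong_induction_on with
  | _ n ih =>
    rcases Nat.eq_zero_or_pos n with rfl | hn
    · exact ⟨1, by simp⟩
    have htot : ∀ k, ∃ z : ℤ, k < n → ((k+1)! : ℚ) * bernoulli k = z := by
      intro k
      by_cases h : k < n
      · exact (ih k h).imp fun z hz => fun _ => hz
      · exact ⟨0, fun hk => absurd hk h⟩
    choose zf hzf using htot
    refine ⟨-∑ k ∈ range n, ((n+1).choose k * ((n ! / (k+1)! : ℕ) : ℤ)) * zf k, ?_⟩
    have hsum := sum_bernoulli (n+1)
    rw [if_neg (by omega), Finset.sum_range_succ, Nat.choose_succ_self_right] at hsum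
    have hB : (n + 1 : ℚ) * bernoulli n = -∑ x ∈ range n, ((n + 1).choose x : ℚ) * bernoulli x := by
      push_cast at hsum ⊢; linarith [hsum]
    have hfac : ((n+1)! : ℚ) = (n ! : ℚ) * (n+1 : ℚ) := by
      rw [Nat.factorial_succ]; push_cast; ring
    rw [hfac, mul_assoc, hB, mul_neg, Finset.mul_sum]
    push_cast
    rw [neg_inj]
    refine Finset.sum_congr rfl fun k hk => ?_
    have hk' : k < n := Finset.mem_range.mp hk
    have hdvd : (k+1)! ∣ n ! := Nat.factorial_dvd_factorial (by omega)
    have hcast : ((n ! / (k+1)! : ℕ) : ℚ) * ((k+1)! : ℚ) = (n ! : ℚ) := by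
      rw [← Nat.cast_mul, Nat.div_mul_cancel hdvd]
    have hz := hzf k hk'
    calc (n ! : ℚ) * (((n + 1).choose k : ℚ) * bernoulli k)
        = ((n + 1).choose k : ℚ) * (((n ! / (k+1)! : ℕ) : ℚ) * (((k+1)! : ℚ) * bernoulli k)) := by
          rw [← mul_assoc, ← hcast]; ring
      _ = ((n + 1).choose k : ℚ) * ((n ! / (k+1)! : ℕ) : ℚ) * (zf k : ℚ) := by rw [hz]; ring

theorem le_totient_sq {n : ℕ} (hn : Odd n) : n ≤ (Nat.totient n)^2 := by
  induction n using Nat.recOnPosPrimePosCoprime with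
  | prime_pow p a hp ha =>
    have hodd : Odd (p^a) := ‹Odd _›
    have hp' : p.Prime := hp
    have hp3 : 3 ≤ p := by
      rcases hp'.eq_two_or_odd' with rfl | hpo
      · exact absurd hodd (by simpa using (Nat.even_pow.mpr ⟨even_two, ha.ne'⟩))
      · have := hp'.two_le
        rcases Nat.eq_or_lt_of_le this with h | h
        · exact absurd hpo (by rw [← h]; decide)
        · omega
    rw [Nat.totient_prime_pow hp' ha]
    obtain ⟨q, rfl⟩ : ∃ q, p = q + 3 := ⟨p - 3, by omega⟩
    have hple : q + 3 ≤ (q+3-1)^2 := by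
      have : q+3-1 = q+2 := by omega
      rw [this]; nlinarith
    calc (q+3) ^ a ≤ (q+3) ^ (2*a - 2) * (q+3) := by
          rcases Nat.eq_or_lt_of_le ha with rfl | ha2
          · simp
          · have h1 : a ≤ 2*a - 2 := by omega
            calc (q+3)^a ≤ (q+3)^(2*a-2) := Nat.pow_le_pow_right (by omega) h1
              _ ≤ (q+3)^(2*a-2) * (q+3) := Nat.le_mul_of_pos_right _ (by omega)
      _ ≤ (q+3) ^ (2*a - 2) * (q+3-1)^2 := Nat.mul_le_mul_left _ hple
      _ = ((q+3) ^ (a - 1) * (q+3-1))^2 := by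
          rw [mul_pow, ← pow_mul]
          congr 2
          omega
  | zero => simp at hn
  | one => simp
  | coprime a b ha hb hab iha ihb =>
    have hoa : Odd a := (Nat.Odd.of_mul_left hn)
    have hob : Odd b := (Nat.Odd.of_mul_right hn)
    rw [Nat.totient_mul hab, mul_pow]
    exact Nat.mul_le_mul (iha hoa) (ihb hob)

theorem sq_lt_two_pow {m : ℕ} (hm : 9 ≤ m) : 4 * m^2 < 2^m := by
  induction m, hm using Nat.le_induction with
  | base => norm_num
  | succ m hm ih =>
    have h2 : 4*(m+1)^2 ≤ 2*(4*m^2) := by nlinarith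
    calc 4*(m+1)^2 ≤ 2*(4*m^2) := h2
      _ < 2*2^m := by omega
      _ = 2^(m+1) := by ring

/-- evaluation of the n-th cyclotomic polynomial at 2, as a natural number -/
noncomputable def Phi (n : ℕ) : ℕ := ((Polynomial.cyclotomic n ℤ).eval 2).toNat

theorem Phi_pos (n : ℕ) : 0 < ((Polynomial.cyclotomic n ℤ).eval 2) :=
  Polynomial.cyclotomic_pos' n (by norm_num)

theorem Phi_cast (n : ℕ) : ((Phi n : ℤ)) = (Polynomial.cyclotomic n ℤ).eval 2 :=
  Int.toNat_of_nonneg (Phi_pos n).le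

theorem Phi_pos' (n : ℕ) : 0 < Phi n := by
  have := Phi_pos n
  have := Phi_cast n
  omega

theorem prod_Phi (n : ℕ) (hn : 0 < n) : ∏ i ∈ n.divisors, Phi i = 2^n - 1 := by
  have h := Polynomial.prod_cyclotomic_eq_X_pow_sub_one hn ℤ
  have h2 := congrArg (Polynomial.eval (2 : ℤ)) h
  rw [Polynomial.eval_prod, Polynomial.eval_sub, Polynomial.eval_pow, Polynomial.eval_X,
    Polynomial.eval_one] at h2
  have : ((∏ i ∈ n.divisors, Phi i : ℕ) : ℤ) = ((2^n - 1 : ℕ) : ℤ) := by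
    push_cast
    rw [Finset.prod_congr rfl fun i _ => Phi_cast i, h2]
    push_cast [Nat.cast_sub (Nat.one_le_two_pow (n:=n))]
    ring
  exact_mod_cast this

theorem Phi_dvd (n : ℕ) (hn : 0 < n) : Phi n ∣ 2^n - 1 := by
  rw [← prod_Phi n hn]
  exact Finset.dvd_prod_of_mem _ (Nat.mem_divisors_self n hn.ne')

theorem prodBound (E : Finset ℕ) : ∀ m : ℕ, 1 ≤ m → (∀ d ∈ E, m ≤ d) →
    1 - 2*(1/2:ℚ)^m ≤ ∏ d ∈ E, (1 - (1/2:ℚ)^d) := by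
  induction E using Finset.strongInduction with
  | _ E ih =>
    intro m hm hE
    rcases E.eq_empty_or_nonempty with rfl | hne
    · have h0 : (0:ℚ) < 2*(1/2:ℚ)^m := by positivity
      rw [Finset.prod_empty]
      linarith
    · set a := E.min' hne with ha
      have haE : a ∈ E := E.min'_mem hne
      have ham : m ≤ a := hE a haE
      have h1a : 1 ≤ a := hm.trans ham
      have hsub : E.erase a ⊂ E := Finset.erase_ssubset haE
      have hrec := ih (E.erase a) hsub (a+1) (by omega) (fun d hd => by
        have hdE := Finset.mem_of_mem_erase hd
        have hda := Finset.ne_of_mem_erase hd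
        have := E.min'_le d hdE
        omega)
      rw [← Finset.mul_prod_erase E _ haE]
      have hx : (0:ℚ) < (1/2:ℚ)^a := by positivity
      have hxm : ((1/2:ℚ))^a ≤ (1/2:ℚ)^m := by
        apply pow_le_pow_of_le_one (by norm_num) (by norm_num) ham
      have hx2 : ((1/2:ℚ))^a ≤ 1/2 := by
        calc ((1/2:ℚ))^a ≤ (1/2:ℚ)^1 := pow_le_pow_of_le_one (by norm_num) (by norm_num) h1a
          _ = 1/2 := by norm_num
      have hstep : 1 - 2*(1/2:ℚ)^(a+1) = 1 - (1/2:ℚ)^a := by ring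
      rw [hstep] at hrec
      have h0 : (0:ℚ) ≤ 1 - (1/2:ℚ)^a := by linarith
      nlinarith [mul_le_mul_of_nonneg_left hrec h0]

theorem prodBound' (E : Finset ℕ) (hE : ∀ d ∈ E, 1 ≤ d) :
    (1/4 : ℚ) ≤ ∏ d ∈ E, (1 - (1/2:ℚ)^d) := by
  have herase : ∀ d ∈ E.erase 1, 2 ≤ d := fun d hd => by
    have := hE d (Finset.mem_of_mem_erase hd)
    have := Finset.ne_of_mem_erase hd
    omega
  have h2 := prodBound (E.erase 1) 2 (by omega) herase
  norm_num at h2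
  by_cases h1 : 1 ∈ E
  · rw [← Finset.mul_prod_erase E _ h1]
    norm_num
    linarith
  · rw [Finset.erase_eq_of_notMem h1] at h2
    linarith

theorem prod_two_zpow {α : Type*} (s : Finset α) (f : α → ℤ) :
    ∏ x ∈ s, (2:ℚ)^(f x) = 2^(∑ x ∈ s, f x) := by
  induction s using Finset.cons_induction with
  | empty => simp
  | cons a s ha ih => rw [Finset.prod_cons, Finset.sum_cons, ih, zpow_add₀ (by norm_num : (2:ℚ) ≠ 0)]

theorem dvd_two_pow_sub_one_iff {p m : ℕ} [hp : Fact p.Prime] :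
    p ∣ 2^m - 1 ↔ (2 : ZMod p)^m = 1 := by
  rw [← ZMod.natCast_eq_zero_iff]
  have h1 : (1:ℕ) ≤ 2^m := Nat.one_le_two_pow
  rw [Nat.cast_sub h1]
  push_cast
  constructor
  · intro h; linear_combination h
  · intro h; rw [h]; ring

/-- p odd prime dividing 2^n-1: basic order facts -/
theorem order_dvd {p n : ℕ} [hp : Fact p.Prime] (h : p ∣ 2^n - 1) :
    orderOf (2 : ZMod p) ∣ n :=
  orderOf_dvd_of_pow_eq_one (dvd_two_pow_sub_one_iff.mp h)

theorem dvd_pow_order {p n : ℕ} [hp : Fact p.Prime] (hn : 0 < n) (h : p ∣ 2^n - 1) :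
    p ∣ 2^(orderOf (2 : ZMod p)) - 1 :=
  dvd_two_pow_sub_one_iff.mpr (pow_orderOf_eq_one _)

theorem p_ne_two {p n : ℕ} (hp : p.Prime) (hn : 0 < n) (h : p ∣ 2^n - 1) : p ≠ 2 := by
  rintro rfl
  have h2 : 2 ∣ 2^n := dvd_pow_self 2 hn.ne'
  have h1 : (1:ℕ) ≤ 2^n := Nat.one_le_two_pow
  have heq : 2^n - (2^n - 1) = 1 := by omega
  have : (2:ℕ) ∣ 1 := heq ▸ Nat.dvd_sub h2 h
  omega

theorem order_dvd_sub_one {p : ℕ} [hp : Fact p.Prime] (hp2 : p ≠ 2) :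
    orderOf (2 : ZMod p) ∣ p - 1 := by
  apply orderOf_dvd_of_pow_eq_one
  apply ZMod.pow_card_sub_one_eq_one
  have : ((2:ℕ) : ZMod p) ≠ 0 := by
    rw [Ne, ZMod.natCast_eq_zero_iff]
    exact fun hd => hp2 ((Nat.prime_dvd_prime_iff_eq hp.out Nat.prime_two).mp hd)  -- p ∣ 2 → p = 2
  exact_mod_cast this

theorem order_eq_of_dvd_Phi {p n : ℕ} [hp : Fact p.Prime] (hn : 0 < n)
    (h : (p:ℤ) ∣ (Polynomial.cyclotomic n ℤ).eval 2) (hpn : ¬ p ∣ n) :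
    orderOf (2 : ZMod p) = n := by
  haveI : NeZero ((n:ℕ) : ZMod p) := by
    refine ⟨fun h0 => hpn ?_⟩
    exact (ZMod.natCast_eq_zero_iff n p).mp h0
  have hroot : Polynomial.IsRoot (Polynomial.cyclotomic n (ZMod p)) 2 := by
    have hmap : (Polynomial.cyclotomic n ℤ).map (Int.castRingHom (ZMod p)) =
        Polynomial.cyclotomic n (ZMod p) := Polynomial.map_cyclotomic_int n (ZMod p)
    have h2 : (2 : ZMod p) = (Int.castRingHom (ZMod p)) (2:ℤ) := by norm_num
    rw [Polynomial.IsRoot, ← hmap, Polynomial.eval_map, h2, Polynomial.eval₂_hom]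
    obtain ⟨c, hc⟩ := h
    rw [hc]
    simp [ZMod.natCast_self]
  have hprim : IsPrimitiveRoot (2 : ZMod p) n := by
    rwa [Polynomial.isRoot_cyclotomic_iff] at hroot
  exact (IsPrimitiveRoot.eq_orderOf hprim).symm


theorem Phi_moebius_prod (n : ℕ) (hn : 0 < n) :
    (Phi n : ℚ) = ∏ x ∈ n.divisorsAntidiagonal, ((2:ℚ)^(x.2) - 1) ^ (μ x.1) := by
  have hf : ∀ i : ℕ, 0 < i → ((fun i => (Phi i : ℚ)) i) ≠ 0 := by
    intro i _
    simp only [ne_eq, Nat.cast_eq_zero]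
    exact (Phi_pos' i).ne'
  have hg : ∀ m : ℕ, 0 < m → ((fun m => (2:ℚ)^m - 1) m) ≠ 0 := by
    intro m hm
    simp only [ne_eq, sub_eq_zero]
    have : (2:ℚ) ≤ 2^m := by
      calc (2:ℚ) = 2^1 := (pow_one 2).symm
        _ ≤ 2^m := pow_le_pow_right₀ (by norm_num) hm
    intro h; rw [h] at this; norm_num at this
  have key := (prod_eq_iff_prod_pow_moebius_eq_of_nonzero
      (f := fun i => (Phi i : ℚ)) (g := fun m => (2:ℚ)^m - 1) hf hg).mp
  have hstep : ∀ m : ℕ, m > 0 → ∏ i ∈ m.divisors, (Phi i : ℚ) = (2:ℚ)^m - 1 := by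
    intro m hm
    have h := prod_Phi m hm
    have h1 : (1:ℕ) ≤ 2^m := Nat.one_le_two_pow
    have h2 := congrArg (fun t : ℕ => (t : ℚ)) h
    push_cast [Nat.cast_sub h1] at h2
    exact_mod_cast h2
  exact (key hstep n hn).symm

theorem totient_moebius_sum (n : ℕ) (hn : 0 < n) :
    ((Nat.totient n : ℤ)) = ∑ x ∈ n.divisorsAntidiagonal, (μ x.1) * (x.2 : ℤ) := by
  have key := (sum_eq_iff_sum_mul_moebius_eq
      (f := fun i : ℕ => (Nat.totient i : ℤ)) (g := fun m : ℕ => (m : ℤ))).mp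
  have hstep : ∀ m : ℕ, m > 0 → ∑ i ∈ m.divisors, (Nat.totient i : ℤ) = (m : ℤ) := by
    intro m hm
    exact_mod_cast congrArg (fun t : ℕ => (t : ℤ)) (Nat.sum_totient m)
  exact (key hstep n hn).symm

theorem two_pow_totient_le (n : ℕ) (hn : 0 < n) : 2^(Nat.totient n) ≤ 4 * Phi n := by
  have hA : ∀ x ∈ n.divisorsAntidiagonal, 1 ≤ x.2 := fun x hx =>
    Nat.pos_of_mem_divisors (Nat.snd_mem_divisors_of_mem_antidiagonal hx)
  have hfac : ∀ x ∈ n.divisorsAntidiagonal,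
      ((2:ℚ)^(x.2) - 1) ^ (μ x.1) =
        ((2:ℚ))^((μ x.1) * (x.2:ℤ)) * ((1 - (1/2:ℚ)^(x.2)) ^ (μ x.1)) := by
    intro x hx
    have h2 : ((2:ℚ)^(x.2) - 1) = (2:ℚ)^(x.2) * (1 - (1/2:ℚ)^(x.2)) := by
      rw [mul_sub, mul_one, ← mul_pow]; norm_num
    rw [h2, mul_zpow, ← zpow_natCast (2:ℚ) x.2, ← zpow_mul, mul_comm (x.2:ℤ) (μ x.1)]
  have hmoeb := Phi_moebius_prod n hn
  rw [Finset.prod_congr rfl hfac, Finset.prod_mul_distrib, prod_two_zpow] at hmoeb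
  rw [← totient_moebius_sum n hn, zpow_natCast] at hmoeb
  set A := n.divisorsAntidiagonal with hAdef
  set G := ∏ x ∈ A, ((1 - (1/2:ℚ)^(x.2)) ^ (μ x.1)) with hGdef
  have hG : (1/4:ℚ) ≤ G := by
    have hv : ∀ x ∈ A, (if μ x.1 = 1 then (1 - (1/2:ℚ)^(x.2)) else 1) ≤
        ((1 - (1/2:ℚ)^(x.2)) ^ (μ x.1)) := by
      intro x hx
      have h1 : (0:ℚ) < (1/2:ℚ)^(x.2) := by positivity
      have h2 : ((1/2:ℚ))^(x.2) ≤ 1/2 := by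
        calc ((1/2:ℚ))^(x.2) ≤ (1/2:ℚ)^1 :=
          pow_le_pow_of_le_one (by norm_num) (by norm_num) (hA x hx)
          _ = 1/2 := by norm_num
      have h3 : (0:ℚ) < 1 - (1/2:ℚ)^(x.2) := by linarith
      by_cases h0 : μ x.1 = 0
      · rw [h0, if_neg (by norm_num), zpow_zero]
      · rcases moebius_ne_zero_iff_eq_or.mp h0 with h | h
        · rw [h, if_pos rfl, zpow_one]
        · rw [h, if_neg (by norm_num), zpow_neg_one]
          exact (one_le_inv₀ h3).mpr (by linarith)
    have hvpos : ∀ x ∈ A, (0:ℚ) ≤ (if μ x.1 = 1 then (1 - (1/2:ℚ)^(x.2)) else 1) := by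
      intro x hx
      have h1 : (0:ℚ) < (1/2:ℚ)^(x.2) := by positivity
      have h2 : ((1/2:ℚ))^(x.2) ≤ 1/2 := by
        calc ((1/2:ℚ))^(x.2) ≤ (1/2:ℚ)^1 :=
          pow_le_pow_of_le_one (by norm_num) (by norm_num) (hA x hx)
          _ = 1/2 := by norm_num
      split <;> linarith
    have hprodv := Finset.prod_le_prod hvpos hv
    refine le_trans ?_ hprodv
    rw [← Finset.prod_filter]
    have himage : ∏ x ∈ A.filter (fun x => μ x.1 = 1), (1 - (1/2:ℚ)^(x.2)) =
        ∏ e ∈ (A.filter (fun x => μ x.1 = 1)).image Prod.snd, (1 - (1/2:ℚ)^e) := by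
      rw [Finset.prod_image]
      intro x hx y hy hxy
      have hx' := Nat.mem_divisorsAntidiagonal.mp (Finset.mem_filter.mp hx).1
      have hy' := Nat.mem_divisorsAntidiagonal.mp (Finset.mem_filter.mp hy).1
      have h2x : 1 ≤ x.2 := hA x (Finset.mem_filter.mp hx).1
      have heq : x.1 * x.2 = y.1 * x.2 := by rw [hx'.1, hxy, hy'.1]
      have : x.1 = y.1 := Nat.eq_of_mul_eq_mul_right (by omega) heq
      exact Prod.ext this hxy
    rw [himage]
    apply prodBound'
    intro e he
    obtain ⟨x, hx, rfl⟩ := Finset.mem_image.mp he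
    exact hA x (Finset.mem_filter.mp hx).1
  have h2pos : (0:ℚ) < 2 ^ (Nat.totient n) := by positivity
  have hq : (2:ℚ)^(Nat.totient n) ≤ 4 * (Phi n : ℚ) := by
    rw [hmoeb]
    nlinarith [hG, h2pos]
  exact_mod_cast hq


theorem big_prime {p n : ℕ} [hpf : Fact p.Prime] (hp2 : p ≠ 2) (hodd : Odd n)
    (hord : orderOf (2 : ZMod p) = n) : 2*n + 1 ≤ p := by
  have h1 : n ∣ p - 1 := hord ▸ order_dvd_sub_one hp2
  have hp3 : 3 ≤ p := by
    have := hpf.out.two_le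
    omega
  have h2 : 2 ∣ p - 1 := by
    have := hpf.out.odd_of_ne_two hp2
    rw [Nat.odd_iff] at this
    omega
  have hcop : Nat.Coprime 2 n :=
    (Nat.Prime.coprime_iff_not_dvd Nat.prime_two).mpr
      (by rw [Nat.two_dvd_ne_zero]; exact Nat.odd_iff.mp hodd)
  have h3 : 2*n ∣ p - 1 := hcop.mul_dvd_of_dvd_of_dvd h2 h1
  have := Nat.le_of_dvd (by omega) h3
  omega

set_option maxRecDepth 10000 in
theorem small_odd_bound : ∀ n : ℕ, n < 81 → 7 ≤ n → n % 2 = 1 → 4*n < 2^(Nat.totient n) := by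
  decide

theorem exists_big_prime {n : ℕ} (hodd : Odd n) (hn5 : 5 ≤ n) :
    ∃ p : ℕ, p.Prime ∧ p ∣ 2^n - 1 ∧ 2*n + 1 ≤ p := by
  rcases eq_or_lt_of_le hn5 with rfl | hn6
  · exact ⟨31, by norm_num, by norm_num, by norm_num⟩
  have hn7 : 7 ≤ n := by
    have := Nat.odd_iff.mp hodd
    omega
  have hn0 : 0 < n := by omega
  by_contra hcon
  push_neg at hcon
  have hdvd : Phi n ∣ n := by
    rw [← Nat.factorization_le_iff_dvd (Phi_pos' n).ne' hn0.ne']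
    rw [Finsupp.le_def]
    intro p
    by_cases hp : p.Prime
    swap
    · simp [Nat.factorization_eq_zero_of_not_prime _ hp]
    by_cases hpPhi : p ∣ Phi n
    swap
    · simp [Nat.factorization_eq_zero_of_not_dvd hpPhi]
    haveI : Fact p.Prime := ⟨hp⟩
    have hp2n : p ∣ 2^n - 1 := dvd_trans hpPhi (Phi_dvd n hn0)
    have hp2 : p ≠ 2 := p_ne_two hp hn0 hp2n
    have hpodd : Odd p := hp.odd_of_ne_two hp2
    set d := orderOf (2 : ZMod p) with hd
    have hdn : d ∣ n := order_dvd hp2n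
    have hd0 : 0 < d := by
      rcases Nat.eq_zero_or_pos d with h | h
      · rw [h] at hdn; rw [Nat.zero_dvd] at hdn; omega
      · exact h
    have hdne : d ≠ n := by
      intro h
      have := big_prime hp2 hodd (hd ▸ h)
      have := hcon p hp hp2n
      omega
    have hdlt : d < n := lt_of_le_of_ne (Nat.le_of_dvd hn0 hdn) hdne
    have hpd : p ∣ 2^d - 1 := dvd_pow_order hn0 hp2n
    have hc0 : (0:ℕ) < 2^d - 1 := by
      have : 2 ≤ 2^d := by
        calc (2:ℕ) = 2^1 := rfl
          _ ≤ 2^d := Nat.pow_le_pow_right (by norm_num) hd0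
      omega
    have hlte : padicValNat p (2^n - 1) = padicValNat p (2^d - 1) + padicValNat p (n/d) := by
      have h1 : (1:ℕ) < 2^d := by omega
      have hx : ¬ p ∣ 2^d := by
        intro h
        exact hp2 ((Nat.prime_dvd_prime_iff_eq hp Nat.prime_two).mp (hp.dvd_of_dvd_pow h))
      have hnd0 : n / d ≠ 0 := (Nat.div_pos (Nat.le_of_dvd hn0 hdn) hd0).ne'
      have key := padicValNat.pow_sub_pow (p := p) hpodd (x := 2^d) (y := 1) h1
        (by simpa using hpd) hx hnd0
      rw [← pow_mul, Nat.mul_div_cancel' hdn, one_pow] at key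
      exact key
    set b := ∏ i ∈ n.divisors.erase n, Phi i with hbdef
    have hb0 : 0 < b := Finset.prod_pos (fun i _ => Phi_pos' i)
    have hsplit : Phi n * b = 2^n - 1 := by
      rw [hbdef, Finset.mul_prod_erase n.divisors Phi (Nat.mem_divisors_self n hn0.ne')]
      exact prod_Phi n hn0
    have hcb : (2^d - 1) ∣ b := by
      rw [← prod_Phi d hd0, hbdef]
      apply Finset.prod_dvd_prod_of_subset
      intro i hi
      have hid := Nat.mem_divisors.mp hi
      rw [Finset.mem_erase, Nat.mem_divisors]
      refine ⟨?_, hid.1.trans hdn, hn0.ne'⟩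
      intro h
      have := Nat.le_of_dvd hd0 hid.1
      omega
    have hvcb : padicValNat p (2^d - 1) ≤ padicValNat p b := by
      have := (Nat.factorization_le_iff_dvd hc0.ne' hb0.ne').mpr hcb
      have h2 := Finsupp.le_def.mp this p
      rwa [Nat.factorization_def _ hp, Nat.factorization_def _ hp] at h2
    have hval : padicValNat p (Phi n) + padicValNat p b
        = padicValNat p (2^d - 1) + padicValNat p (n/d) := by
      rw [← padicValNat.mul (Phi_pos' n).ne' hb0.ne', hsplit, hlte]
    have hle1 : padicValNat p (Phi n) ≤ padicValNat p (n / d) := by omega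
    have hnd_dvd : n / d ∣ n := Nat.div_dvd_of_dvd hdn
    have hnd0 : n / d ≠ 0 := (Nat.div_pos (Nat.le_of_dvd hn0 hdn) hd0).ne'
    have hle2 : padicValNat p (n / d) ≤ padicValNat p n := by
      have := (Nat.factorization_le_iff_dvd hnd0 hn0.ne').mpr hnd_dvd
      have h2 := Finsupp.le_def.mp this p
      rwa [Nat.factorization_def _ hp, Nat.factorization_def _ hp] at h2
    rw [Nat.factorization_def _ hp, Nat.factorization_def _ hp]
    omega
  have hPhile : Phi n ≤ n := Nat.le_of_dvd hn0 hdvd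
  have hlow := two_pow_totient_le n hn0
  have hsmall : 4 * n < 2^(Nat.totient n) := by
    rcases lt_or_ge n 81 with h81 | h81
    · exact small_odd_bound n h81 hn7 (Nat.odd_iff.mp hodd)
    · have hsq := le_totient_sq hodd
      have hm : 9 ≤ Nat.totient n := by nlinarith
      calc 4*n ≤ 4*(Nat.totient n)^2 := by nlinarith
        _ < 2^(Nat.totient n) := sq_lt_two_pow hm
  omega

end E8Aux

/-- For odd `k > 1` there is no integer `x` with `s_k · x = 8`: the Milnor E₈ manifold
`M^(4k)` does not have the rational homotopy type of a smooth manifold for `k > 1` odd. -/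
theorem e8_no_solution_odd (k : ℕ) (hk : 1 < k) (hodd : Odd k) :
    ¬ ∃ x : ℤ, sL k * (x : ℚ) = 8 := by
  rintro ⟨x, hx⟩
  have hk3 : 3 ≤ k := by
    have := Nat.odd_iff.mp hodd
    omega
  -- B_{2k} ≠ 0, else sL k = 0
  rcases eq_or_ne (bernoulli (2*k)) 0 with hB | hB
  · rw [sL, hB] at hx
    simp at hx
  have hxne : (x:ℚ) ≠ 0 := by
    intro h
    rw [h, mul_zero] at hx
    norm_num at hx
  set n := 2*k - 1 with hn
  have hnodd : Odd n := by
    rw [Nat.odd_iff]; omega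
  obtain ⟨p, hp, hpdvd, hple⟩ := exists_big_prime hnodd (by omega)
  haveI : Fact p.Prime := ⟨hp⟩
  have hp2 : p ≠ 2 := by omega
  have hpk : 2*k + 1 < p := by omega
  obtain ⟨z, hz⟩ := bernoulli_fact_int (2*k)
  have hzne : (z:ℚ) ≠ 0 := by
    rw [← hz]
    exact mul_ne_zero (Nat.cast_ne_zero.mpr (Nat.factorial_ne_zero _)) hB
  have hBeq : bernoulli (2*k) = (z:ℚ) / ((2*k+1)! : ℚ) := by
    field_simp [Nat.cast_ne_zero.mpr (Nat.factorial_ne_zero (2*k+1))]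
    linear_combination hz
  -- nonzeroness of all factors
  have hA1 : ((2:ℚ)) ^ (2*k) ≠ 0 := by positivity
  have h2n : (2:ℕ) ≤ 2^n := by
    calc (2:ℕ) = 2^1 := rfl
      _ ≤ 2^n := Nat.pow_le_pow_right (by norm_num) (by omega)
  have hA2cast : ((2:ℚ)) ^ (2*k-1) - 1 = ((2^n - 1 : ℕ) : ℚ) := by
    push_cast [Nat.cast_sub (by omega : 1 ≤ 2^n)]
    norm_num
    omega
  have hA2 : ((2:ℚ)) ^ (2*k-1) - 1 ≠ 0 := by
    rw [hA2cast]
    exact_mod_cast (by omega : (2^n - 1 : ℕ) ≠ 0)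
  have hA3 : |bernoulli (2*k)| ≠ 0 := abs_ne_zero.mpr hB
  have hA4 : ((2*k)! : ℚ) ≠ 0 := Nat.cast_ne_zero.mpr (Nat.factorial_ne_zero _)
  -- valuations
  have hv1 : padicValRat p ((2:ℚ) ^ (2*k)) = 0 := by
    have : ((2:ℚ)) ^ (2*k) = ((2^(2*k) : ℕ) : ℚ) := by push_cast; ring
    rw [this, padicValRat.of_nat]
    norm_cast
    apply padicValNat.eq_zero_of_not_dvd
    intro h
    exact hp2 ((Nat.prime_dvd_prime_iff_eq hp Nat.prime_two).mp (hp.dvd_of_dvd_pow h))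
  have hv2 : 1 ≤ padicValRat p ((2:ℚ) ^ (2*k-1) - 1) := by
    rw [hA2cast, padicValRat.of_nat]
    exact_mod_cast one_le_padicValNat_of_dvd (by omega) hpdvd
  have hv3 : 0 ≤ padicValRat p |bernoulli (2*k)| := by
    have habs : padicValRat p |bernoulli (2*k)| = padicValRat p (bernoulli (2*k)) := by
      rcases abs_choice (bernoulli (2*k)) with h | h <;> rw [h]
      exact padicValRat.neg _
    have hA5 : ((2*k+1)! : ℚ) ≠ 0 := Nat.cast_ne_zero.mpr (Nat.factorial_ne_zero _)
    rw [habs, hBeq, padicValRat.div hzne hA5]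
    have hz1 : padicValRat p ((z:ℤ) : ℚ) = padicValInt p z := padicValRat.of_int
    have hz2 : padicValRat p (((2*k+1)! : ℕ) : ℚ) = padicValNat p ((2*k+1)!) :=
      padicValRat.of_nat
    rw [hz1, hz2, padicValNat.eq_zero_of_not_dvd (by
      rw [Nat.Prime.dvd_factorial hp]; omega)]
    simp
  have hv4 : padicValRat p (((2*k)! : ℕ) : ℚ) = 0 := by
    rw [padicValRat.of_nat]
    norm_cast
    apply padicValNat.eq_zero_of_not_dvd
    rw [Nat.Prime.dvd_factorial hp]
    omega
  have hsLne : sL k ≠ 0 :=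
    div_ne_zero (mul_ne_zero (mul_ne_zero hA1 hA2) hA3) hA4
  have hvsL : 1 ≤ padicValRat p (sL k) := by
    rw [sL, padicValRat.div (mul_ne_zero (mul_ne_zero hA1 hA2) hA3) hA4,
      padicValRat.mul (mul_ne_zero hA1 hA2) hA3, padicValRat.mul hA1 hA2, hv1, hv4]
    omega
  have hv8 : padicValRat p (8:ℚ) = 0 := by
    have : (8:ℚ) = ((8:ℕ) : ℚ) := by norm_num
    rw [this, padicValRat.of_nat]
    norm_cast
    apply padicValNat.eq_zero_of_not_dvd
    intro h
    have h8 : (8:ℕ) = 2^3 := by norm_num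
    rw [h8] at h
    exact hp2 ((Nat.prime_dvd_prime_iff_eq hp Nat.prime_two).mp (hp.dvd_of_dvd_pow h))
  have hvx : 0 ≤ padicValRat p ((x:ℤ) : ℚ) := by
    rw [padicValRat.of_int]
    exact Int.natCast_nonneg _
  have := congrArg (padicValRat p) hx
  rw [padicValRat.mul hsLne hxne, hv8] at this
  omega
end
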